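/- arXiv:1605.01885 — 10 statements merged into one kernel-verified Lean document; each statement's English description precedes it below -/
import Mathlib

section
/- Let h : ℝ → ℝ be convex, let W : ℝ → ℝ be a 1-periodic, even, Lipschitz function with Lipschitz constant 1, and let ε, τ > 0. Suppose y is a global minimizer over ℝ of t ↦ h(t) + ε·W(t/ε) + (1/(2τ))(t − a)² and z is a global minimizer over ℝ of t ↦ h(t) + ε·W(t/ε) + (1/(2τ))(t − y)². If y < a then z ≤ y, and if y > a then z ≥ y. In particular, any discrete trajectory (x_i) defined by choosing x_{i+1} as a global minimizer of x ↦ h(x) + ε·W(x/ε) + (1/(2τ))(x − x_i)², in which all consecutive steps are in a fixed strict direction, is monotone. -/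
/-- Testing the minimality of `y` against `z` and of `z` against `y` cancels the energy `E`; by
`(z - a)² = (z - y)² + 2 (z - y) (y - a) + (y - a)²` what remains is `0 ≤ 2c (z - y) (y - a)`. -/
theorem proximal_steps_mul_nonneg {E : ℝ → ℝ} {c a y z : ℝ} (hc : 0 < c)
    (hy : ∀ t, E y + c * (y - a) ^ 2 ≤ E t + c * (t - a) ^ 2)
    (hz : ∀ t, E z + c * (z - y) ^ 2 ≤ E t + c * (t - y) ^ 2) :
    0 ≤ (z - y) * (y - a) := by
  have hsum : 0 ≤ c * ((z - y) * (y - a)) := by linarith [hy z, hz y]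
  exact nonneg_of_mul_nonneg_right hsum hc

theorem stmt_3_general (h : ℝ → ℝ)
    (W : ℝ → ℝ)
    (ε τ : ℝ) (hτ : 0 < τ)
    (a y z : ℝ)
    (hy : ∀ t : ℝ, h y + ε * W (y / ε) + 1 / (2 * τ) * (y - a) ^ 2 ≤
      h t + ε * W (t / ε) + 1 / (2 * τ) * (t - a) ^ 2)
    (hz : ∀ t : ℝ, h z + ε * W (z / ε) + 1 / (2 * τ) * (z - y) ^ 2 ≤
      h t + ε * W (t / ε) + 1 / (2 * τ) * (t - y) ^ 2) :
    ((y < a → z ≤ y) ∧ (a < y → y ≤ z)) ∧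
    (∀ x : ℕ → ℝ,
      (∀ i : ℕ, ∀ t : ℝ,
        h (x (i + 1)) + ε * W (x (i + 1) / ε) + 1 / (2 * τ) * (x (i + 1) - x i) ^ 2 ≤
          h t + ε * W (t / ε) + 1 / (2 * τ) * (t - x i) ^ 2) →
      ((∀ i : ℕ, x (i + 1) < x i) ∨ (∀ i : ℕ, x i < x (i + 1))) →
      (Antitone x ∨ Monotone x)) := by
  have hprod : 0 ≤ (z - y) * (y - a) :=
    proximal_steps_mul_nonneg (E := fun t => h t + ε * W (t / ε)) (by positivity) hy hz
  refine ⟨⟨fun hya => ?_, fun hay => ?_⟩, fun x _ hdir => ?_⟩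
  · nlinarith
  · nlinarith
  · exact hdir.imp (fun hd => antitone_nat_of_succ_le fun i => (hd i).le)
      (fun hd => monotone_nat_of_le_succ fun i => (hd i).le)

theorem stmt_3 (h : ℝ → ℝ) (hconv : ConvexOn ℝ Set.univ h)
    (W : ℝ → ℝ) (hper : Function.Periodic W 1) (heven : ∀ x : ℝ, W (-x) = W x)
    (hlip : LipschitzWith 1 W)
    (ε τ : ℝ) (hε : 0 < ε) (hτ : 0 < τ)
    (a y z : ℝ)
    (hy : ∀ t : ℝ, h y + ε * W (y / ε) + 1 / (2 * τ) * (y - a) ^ 2 ≤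
      h t + ε * W (t / ε) + 1 / (2 * τ) * (t - a) ^ 2)
    (hz : ∀ t : ℝ, h z + ε * W (z / ε) + 1 / (2 * τ) * (z - y) ^ 2 ≤
      h t + ε * W (t / ε) + 1 / (2 * τ) * (t - y) ^ 2) :
    ((y < a → z ≤ y) ∧ (a < y → y ≤ z)) ∧
    (∀ x : ℕ → ℝ,
      (∀ i : ℕ, ∀ t : ℝ,
        h (x (i + 1)) + ε * W (x (i + 1) / ε) + 1 / (2 * τ) * (x (i + 1) - x i) ^ 2 ≤
          h t + ε * W (t / ε) + 1 / (2 * τ) * (t - x i) ^ 2) →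
      ((∀ i : ℕ, x (i + 1) < x i) ∨ (∀ i : ℕ, x i < x (i + 1))) →
      (Antitone x ∨ Monotone x)) :=
  stmt_3_general h W ε τ hτ a y z hy hz
end

section
/- Let h : ℝ → ℝ be strictly convex and differentiable at a point c ∈ ℝ, set T = h'(c). Let W : ℝ → ℝ be a 1-periodic, even, Lipschitz function with Lipschitz constant 1, and let ε, τ > 0. Let u, v ∈ ℝ with v ≤ u and u, v < c; let u' be a global minimizer over ℝ of t ↦ h(t) + ε·W(t/ε) + (1/(2τ))(t − u)² and v' a global minimizer over ℝ of t ↦ T·t + ε·W(t/ε) + (1/(2τ))(t − v)². If moreover u' < c and v' < c, then v' ≤ u'. -/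
/-!
Test each minimality inequality at the other minimizer and add the two: the common perturbation
`ε W(t/ε)` cancels and the quadratic penalties contribute `(1/τ)(v' - u')(u - v)`, which is `≥ 0`
if `u' < v'`; then `(h - T·id)(u') ≤ (h - T·id)(v')`. Strict convexity rules this out left of `c`,
where every secant slope of `h` is strictly below `h'(c) = T`.
-/

open Set

theorem StrictConvexOn.strictAntiOn_sub_mul {S : Set ℝ} {f : ℝ → ℝ} {c f' : ℝ}
    (hf : StrictConvexOn ℝ S f) (hc : c ∈ S) (hf' : HasDerivAt f f' c) :
    StrictAntiOn (fun x => f x - f' * x) (S ∩ Iic c) := by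
  rintro x ⟨hxS, hxc⟩ y ⟨hyS, hyc⟩ hxy
  have hxc' : x < c := hxy.trans_le hyc
  have hsecant : (f y - f x) / (y - x) ≤ (f c - f x) / (c - x) :=
    hf.convexOn.secant_mono hxS hyS hc hxy.ne' hxc'.ne' hyc
  have hslope : slope f x c < f' := hf.slope_lt_of_hasDerivAt hxS hc hxc' hf'
  rw [slope_def_field] at hslope
  have := (div_lt_iff₀ (sub_pos.mpr hxy)).mp (hsecant.trans_lt hslope)
  linarith

theorem le_of_isMinOn_add_sq_of_strictAntiOn_sub {f g w : ℝ → ℝ} {s : Set ℝ} {q u v x y : ℝ}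
    (hfg : StrictAntiOn (fun t => f t - g t) s) (hq : 0 ≤ q) (hvu : v ≤ u)
    (hx : x ∈ s) (hy : y ∈ s)
    (hxmin : IsMinOn (fun t => f t + w t + q * (t - u) ^ 2) univ x)
    (hymin : IsMinOn (fun t => g t + w t + q * (t - v) ^ 2) univ y) :
    y ≤ x := by
  by_contra! hxy
  have hanti : f y - g y < f x - g x := hfg hx hy hxy
  have hxy_le := isMinOn_univ_iff.mp hxmin y
  have hyx_le := isMinOn_univ_iff.mp hymin x
  nlinarith [mul_nonneg hq (mul_nonneg (sub_nonneg.mpr hvu) (sub_nonneg.mpr hxy.le))]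

theorem stmt_4_general (h : ℝ → ℝ) (hconv : StrictConvexOn ℝ Set.univ h)
    (c T : ℝ) (hT : HasDerivAt h T c)
    (W : ℝ → ℝ)
    (ε τ : ℝ) (hτ : 0 < τ)
    (u v : ℝ) (hvu : v ≤ u)
    (u' v' : ℝ)
    (hu' : ∀ t : ℝ, h u' + ε * W (u' / ε) + 1 / (2 * τ) * (u' - u) ^ 2 ≤
      h t + ε * W (t / ε) + 1 / (2 * τ) * (t - u) ^ 2)
    (hv' : ∀ t : ℝ, T * v' + ε * W (v' / ε) + 1 / (2 * τ) * (v' - v) ^ 2 ≤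
      T * t + ε * W (t / ε) + 1 / (2 * τ) * (t - v) ^ 2)
    (hu'c : u' < c) (hv'c : v' < c) :
    v' ≤ u' :=
  le_of_isMinOn_add_sq_of_strictAntiOn_sub (w := fun t => ε * W (t / ε))
    (hconv.strictAntiOn_sub_mul (mem_univ c) hT) (by positivity) hvu
    ⟨mem_univ u', hu'c.le⟩ ⟨mem_univ v', hv'c.le⟩
    (isMinOn_univ_iff.mpr hu') (isMinOn_univ_iff.mpr hv')

theorem stmt_4 (h : ℝ → ℝ) (hconv : StrictConvexOn ℝ Set.univ h)
    (c T : ℝ) (hT : HasDerivAt h T c)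
    (W : ℝ → ℝ) (hper : Function.Periodic W 1) (heven : ∀ x : ℝ, W (-x) = W x)
    (hlip : LipschitzWith 1 W)
    (ε τ : ℝ) (hε : 0 < ε) (hτ : 0 < τ)
    (u v : ℝ) (hvu : v ≤ u) (huc : u < c) (hvc : v < c)
    (u' v' : ℝ)
    (hu' : ∀ t : ℝ, h u' + ε * W (u' / ε) + 1 / (2 * τ) * (u' - u) ^ 2 ≤
      h t + ε * W (t / ε) + 1 / (2 * τ) * (t - u) ^ 2)
    (hv' : ∀ t : ℝ, T * v' + ε * W (v' / ε) + 1 / (2 * τ) * (v' - v) ^ 2 ≤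
      T * t + ε * W (t / ε) + 1 / (2 * τ) * (t - v) ^ 2)
    (hu'c : u' < c) (hv'c : v' < c) :
    v' ≤ u' :=
  stmt_4_general h hconv c T hT W ε τ hτ u v hvu u' v' hu' hv' hu'c hv'c
end

section
/- Let h : ℝ → ℝ be strictly convex and differentiable at a point c ∈ ℝ, set T = h'(c). Let W : ℝ → ℝ be a 1-periodic, even, Lipschitz function with Lipschitz constant 1, and let ε, τ > 0. Let u, v ∈ ℝ with u ≤ v and u, v > c; let u' be a global minimizer over ℝ of t ↦ h(t) + ε·W(t/ε) + (1/(2τ))(t − u)² and v' a global minimizer over ℝ of t ↦ T·t + ε·W(t/ε) + (1/(2τ))(t − v)². If moreover u' > c and v' > c, then u' ≤ v'. -/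
/-! Suppose `v' < u'`. Testing each minimality condition against the other minimizer and adding
the two inequalities, the quadratic penalties contribute `2 (u' - v') (v - u) / (2τ) ≥ 0` and the
`W` terms cancel, leaving `h u' - h v' ≤ T (u' - v')`. Since `c < v'`, strict convexity of `h`
says the secant slope of `h` over `[v', u']` strictly exceeds `h'(c) = T`, a contradiction. -/

theorem StrictConvexOn.lt_slope_of_hasDerivAt_of_le {S : Set ℝ} {f : ℝ → ℝ} {c x y f' : ℝ}
    (hfc : StrictConvexOn ℝ S f) (hc : c ∈ S) (hx : x ∈ S) (hy : y ∈ S) (hcx : c ≤ x)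
    (hxy : x < y) (hf : HasDerivAt f f' c) :
    f' < slope f x y := by
  calc f' < slope f c y := hfc.lt_slope_of_hasDerivAt hc hy (hcx.trans_lt hxy) hf
    _ = slope f y c := slope_comm f c y
    _ ≤ slope f y x :=
      hfc.convexOn.slope_mono hy ⟨hc, (hcx.trans_lt hxy).ne⟩ ⟨hx, hxy.ne⟩ hcx
    _ = slope f x y := slope_comm f y x

theorem le_of_forall_add_sq_le {F G : ℝ → ℝ} {k u v u' v' : ℝ} (hk : 0 ≤ k) (huv : u ≤ v)
    (hu' : ∀ t, F u' + k * (u' - u) ^ 2 ≤ F t + k * (t - u) ^ 2)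
    (hv' : ∀ t, G v' + k * (v' - v) ^ 2 ≤ G t + k * (t - v) ^ 2)
    (hFG : v' < u' → G u' - G v' < F u' - F v') :
    u' ≤ v' := by
  by_contra! hlt
  have hpenalty : 0 ≤ k * ((u' - v') * (v - u)) :=
    mul_nonneg hk (mul_nonneg (sub_nonneg.mpr hlt.le) (sub_nonneg.mpr huv))
  linarith [hu' v', hv' u', hFG hlt]

theorem stmt_5_general (h : ℝ → ℝ) (hconv : StrictConvexOn ℝ Set.univ h)
    (c T : ℝ) (hT : HasDerivAt h T c)
    (W : ℝ → ℝ)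
    (ε τ : ℝ) (hτ : 0 < τ)
    (u v : ℝ) (huv : u ≤ v)
    (u' v' : ℝ)
    (hu' : ∀ t : ℝ, h u' + ε * W (u' / ε) + 1 / (2 * τ) * (u' - u) ^ 2 ≤
      h t + ε * W (t / ε) + 1 / (2 * τ) * (t - u) ^ 2)
    (hv' : ∀ t : ℝ, T * v' + ε * W (v' / ε) + 1 / (2 * τ) * (v' - v) ^ 2 ≤
      T * t + ε * W (t / ε) + 1 / (2 * τ) * (t - v) ^ 2)
    (hv'c : c < v') :
    u' ≤ v' := by
  refine le_of_forall_add_sq_le (F := fun t => h t + ε * W (t / ε))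
    (G := fun t => T * t + ε * W (t / ε)) (by positivity) huv hu' hv' fun hlt => ?_
  have hslope : T < (h u' - h v') / (u' - v') := by
    simpa only [slope_def_field] using hconv.lt_slope_of_hasDerivAt_of_le (Set.mem_univ c)
      (Set.mem_univ v') (Set.mem_univ u') hv'c.le hlt hT
  have hsecant : T * (u' - v') < h u' - h v' := (lt_div_iff₀ (sub_pos.mpr hlt)).mp hslope
  linarith

theorem stmt_5 (h : ℝ → ℝ) (hconv : StrictConvexOn ℝ Set.univ h)
    (c T : ℝ) (hT : HasDerivAt h T c)
    (W : ℝ → ℝ) (hper : Function.Periodic W 1) (heven : ∀ x : ℝ, W (-x) = W x)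
    (hlip : LipschitzWith 1 W)
    (ε τ : ℝ) (hε : 0 < ε) (hτ : 0 < τ)
    (u v : ℝ) (huv : u ≤ v) (huc : c < u) (hvc : c < v)
    (u' v' : ℝ)
    (hu' : ∀ t : ℝ, h u' + ε * W (u' / ε) + 1 / (2 * τ) * (u' - u) ^ 2 ≤
      h t + ε * W (t / ε) + 1 / (2 * τ) * (t - u) ^ 2)
    (hv' : ∀ t : ℝ, T * v' + ε * W (v' / ε) + 1 / (2 * τ) * (v' - v) ^ 2 ≤
      T * t + ε * W (t / ε) + 1 / (2 * τ) * (t - v) ^ 2)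
    (hu'c : c < u') (hv'c : c < v') :
    u' ≤ v' :=
  stmt_5_general h hconv c T hT W ε τ hτ u v huv u' v' hu' hv' hv'c
end

section
/- Let W : ℝ → ℝ be a 1-periodic, even, Lipschitz function with Lipschitz constant 1, let γ > 0 and T, S ∈ ℝ with T < S. Let (y_i) be an orbit of the linearized scheme with parameter T and initial datum y₀, and let (z_i) be an orbit of the linearized scheme with parameter S and initial datum z₀. If z₀ ≤ y₀, then z_i ≤ y_i for every i ∈ ℕ. -/
/-- An orbit of the linearized minimizing-movement scheme with parameter `T` and
spatial/temporal ratio `γ`: each `y (i+1)` is a global minimizer over `ℝ` of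
`t ↦ T * t + W t + γ / 2 * (t - y i) ^ 2`. -/
def IsOrbit (W : ℝ → ℝ) (γ T : ℝ) (y : ℕ → ℝ) : Prop :=
  ∀ i : ℕ, ∀ t : ℝ,
    T * y (i + 1) + W (y (i + 1)) + γ / 2 * (y (i + 1) - y i) ^ 2 ≤
      T * t + W t + γ / 2 * (t - y i) ^ 2

/- Testing each minimality inequality at the other minimizer and adding them cancels `W`,
and the quadratic terms combine into a product. -/
theorem le_of_minimizer_of_minimizer (W : ℝ → ℝ) {γ T S a b a' b' : ℝ} (hγ : 0 ≤ γ)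
    (hTS : T < S) (hba : b ≤ a)
    (ha' : ∀ t, T * a' + W a' + γ / 2 * (a' - a) ^ 2 ≤ T * t + W t + γ / 2 * (t - a) ^ 2)
    (hb' : ∀ t, S * b' + W b' + γ / 2 * (b' - b) ^ 2 ≤ S * t + W t + γ / 2 * (t - b) ^ 2) :
    b' ≤ a' := by
  have hsum : (b' - a') * ((S - T) + γ * (a - b)) ≤ 0 := by
    linarith [ha' b', hb' a']
  have hpos : 0 < (S - T) + γ * (a - b) := by
    linarith [mul_nonneg hγ (sub_nonneg.mpr hba)]
  exact sub_nonpos.mp (nonpos_of_mul_nonpos_left hsum hpos)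

theorem IsOrbit.succ_le {W : ℝ → ℝ} {γ T S : ℝ} {y z : ℕ → ℝ} (hy : IsOrbit W γ T y)
    (hz : IsOrbit W γ S z) (hγ : 0 ≤ γ) (hTS : T < S) {i : ℕ} (hi : z i ≤ y i) :
    z (i + 1) ≤ y (i + 1) :=
  le_of_minimizer_of_minimizer W hγ hTS hi (hy i) (hz i)

theorem stmt_6_general (W : ℝ → ℝ)
    (γ : ℝ) (hγ : 0 < γ) (T S : ℝ) (hTS : T < S)
    (y z : ℕ → ℝ) (hy : IsOrbit W γ T y) (hz : IsOrbit W γ S z)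
    (h0 : z 0 ≤ y 0) :
    ∀ i : ℕ, z i ≤ y i := by
  intro i
  induction i with
  | zero => exact h0
  | succ i ih => exact hy.succ_le hz hγ.le hTS ih

theorem stmt_6 (W : ℝ → ℝ) (hper : Function.Periodic W 1) (heven : ∀ x : ℝ, W (-x) = W x)
    (hlip : LipschitzWith 1 W)
    (γ : ℝ) (hγ : 0 < γ) (T S : ℝ) (hTS : T < S)
    (y z : ℕ → ℝ) (hy : IsOrbit W γ T y) (hz : IsOrbit W γ S z)
    (h0 : z 0 ≤ y 0) :
    ∀ i : ℕ, z i ≤ y i :=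
  stmt_6_general W γ hγ T S hTS y z hy hz h0
end

section
/- Let W : ℝ → ℝ be a 1-periodic, even, Lipschitz function with Lipschitz constant 1 and let γ > 0. The homogenised velocity T ↦ f_γ(T) is monotone increasing: if T ≤ S then f_γ(T) ≤ f_γ(S). -/
/-!
The scheme is order preserving: increasing the tilt `T` or lowering the previous position can only
lower the minimizers. Concretely, if `y'` minimizes the `T`-problem centred at `c` and `w` the
`S`-problem centred at `c' ≤ c`, with `T ≤ S`, then `min w y'` still minimizes the `S`-problem.
Taking these minima step by step turns any `T`-orbit into an `S`-orbit with the same initial datum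
that stays below it, so its average displacement `(y₀ - yᵢ) / i` is larger.
-/

def IsSchemeStep (W : ℝ → ℝ) (γ A c m : ℝ) : Prop :=
  ∀ t : ℝ, A * m + W m + γ / 2 * (m - c) ^ 2 ≤ A * t + W t + γ / 2 * (t - c) ^ 2

lemma energy_le_of_abs_sub_ge {W : ℝ → ℝ} {K : NNReal} (hlip : LipschitzWith K W) {γ : ℝ}
    (hγ : 0 < γ) (A c t : ℝ) (ht : 2 * (|A| + K) / γ ≤ |t - c|) :
    A * c + W c + γ / 2 * (c - c) ^ 2 ≤ A * t + W t + γ / 2 * (t - c) ^ 2 := by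
  have hW : W c - K * |t - c| ≤ W t := by
    have := hlip.dist_le_mul t c
    rw [Real.dist_eq, Real.dist_eq] at this
    linarith [neg_abs_le (W t - W c)]
  have hA : A * c - |A| * |t - c| ≤ A * t := by
    linarith [neg_abs_le (A * (t - c)), abs_mul A (t - c)]
  have hquad : 2 * (|A| + K) ≤ γ * |t - c| := by rwa [div_le_iff₀' hγ] at ht
  rw [← sq_abs (t - c)]
  nlinarith [abs_nonneg (t - c)]

lemma exists_isSchemeStep {W : ℝ → ℝ} {K : NNReal} (hlip : LipschitzWith K W) {γ : ℝ}
    (hγ : 0 < γ) (A c : ℝ) : ∃ m, IsSchemeStep W γ A c m := by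
  have hcont : Continuous fun t => A * t + W t + γ / 2 * (t - c) ^ 2 := by
    have := hlip.continuous
    fun_prop
  refine hcont.exists_forall_le' c ?_
  rw [← Metric.cobounded_eq_cocompact]
  filter_upwards [(Metric.tendsto_dist_right_cobounded_atTop c).eventually_ge_atTop
    (2 * (|A| + K) / γ)] with t ht
  exact energy_le_of_abs_sub_ge hlip hγ A c t (by rwa [Real.dist_eq] at ht)

lemma IsSchemeStep.min {W : ℝ → ℝ} {γ T S c c' y' w : ℝ} (hγ : 0 ≤ γ) (hTS : T ≤ S)
    (hc : c' ≤ c) (hy' : IsSchemeStep W γ T c y') (hw : IsSchemeStep W γ S c' w) :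
    IsSchemeStep W γ S c' (min w y') := by
  rcases le_total w y' with h | h
  · rwa [min_eq_left h]
  · rw [min_eq_right h]
    intro t
    -- Subtracting the `T`-energies at `y'` and `w` from the `S`-energies leaves
    -- `(y' - w) * ((S - T) + γ * (c - c')) ≤ 0`, so `y'` beats `w` in the `S`-problem.
    have hy'w : S * y' + W y' + γ / 2 * (y' - c') ^ 2 ≤ S * w + W w + γ / 2 * (w - c') ^ 2 := by
      nlinarith [hy' w, mul_nonneg (sub_nonneg.2 h) (add_nonneg (sub_nonneg.2 hTS)
        (mul_nonneg hγ (sub_nonneg.2 hc)))]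
    exact hy'w.trans (hw t)

lemma exists_isOrbit {W : ℝ → ℝ} {γ T : ℝ} (hstep : ∀ c, ∃ m, IsSchemeStep W γ T c m) :
    ∃ y, IsOrbit W γ T y := by
  choose F hF using hstep
  exact ⟨fun n => Nat.rec (motive := fun _ => ℝ) 0 (fun _ yn => F yn) n, fun i => hF _⟩

lemma IsOrbit.exists_isOrbit_le {W : ℝ → ℝ} {γ T S : ℝ} {y : ℕ → ℝ} (hy : IsOrbit W γ T y)
    (hγ : 0 ≤ γ) (hTS : T ≤ S) (hstep : ∀ c, ∃ m, IsSchemeStep W γ S c m) :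
    ∃ z, IsOrbit W γ S z ∧ z 0 = y 0 ∧ ∀ i, z i ≤ y i := by
  choose F hF using hstep
  let z : ℕ → ℝ := fun n =>
    Nat.rec (motive := fun _ => ℝ) (y 0) (fun k zk => min (F zk) (y (k + 1))) n
  have hzy : ∀ i, z i ≤ y i
    | 0 => le_rfl
    | _ + 1 => min_le_right _ _
  exact ⟨z, fun i => IsSchemeStep.min hγ hTS (hzy i) (hy i) (hF (z i)), rfl, hzy⟩

theorem stmt_10_general (W : ℝ → ℝ)
    (hlip : LipschitzWith 1 W)
    (γ : ℝ) (hγ : 0 < γ)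
    (fγ : ℝ → ℝ)
    (hfγ : ∀ T : ℝ, ∀ y : ℕ → ℝ, IsOrbit W γ T y →
      Filter.Tendsto (fun i : ℕ => (y 0 - y i) / (i : ℝ)) Filter.atTop (nhds (fγ T)))
    (T S : ℝ) (hTS : T ≤ S) :
    fγ T ≤ fγ S := by
  obtain ⟨y, hy⟩ := exists_isOrbit (exists_isSchemeStep hlip hγ T)
  obtain ⟨z, hz, hz0, hzy⟩ := hy.exists_isOrbit_le hγ.le hTS (exists_isSchemeStep hlip hγ S)
  refine le_of_tendsto_of_tendsto' (hfγ T y hy) (hfγ S z hz) fun i => ?_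
  rw [hz0]
  exact div_le_div_of_nonneg_right (by linarith [hzy i]) i.cast_nonneg

theorem stmt_10 (W : ℝ → ℝ) (hper : Function.Periodic W 1) (heven : ∀ x : ℝ, W (-x) = W x)
    (hlip : LipschitzWith 1 W)
    (γ : ℝ) (hγ : 0 < γ)
    (fγ : ℝ → ℝ)
    (hfγ : ∀ T : ℝ, ∀ y : ℕ → ℝ, IsOrbit W γ T y →
      Filter.Tendsto (fun i : ℕ => (y 0 - y i) / (i : ℝ)) Filter.atTop (nhds (fγ T)))
    (T S : ℝ) (hTS : T ≤ S) :
    fγ T ≤ fγ S :=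
  stmt_10_general W hlip γ hγ fγ hfγ T S hTS
end

section
/- Let W : ℝ → ℝ be a 1-periodic, even, Lipschitz function with Lipschitz constant 1, let γ > 0 and T > 0, and let p ∈ ℤ and q ∈ ℕ with q ≠ 0. Then there exists an initial datum y₀ and an orbit (y_i) of the linearized scheme with parameter T such that y_{kq+i} = y_i + k·p for all i, k ∈ ℕ, if and only if f_γ(T) = −p/q. -/
open Filter Set Topology Function

theorem Monotone.exists_isFixedPt_of_le_of_map_le {α : Type*} [ConditionallyCompleteLattice α]
    {a : α → α} (ha : Monotone a) {c d : α} (hcd : c ≤ d) (hc : c ≤ a c) (hd : a d ≤ d) :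
    ∃ x, IsFixedPt a x := by
  set S := {x | x ≤ d ∧ x ≤ a x}
  have hS : S.Nonempty := ⟨c, hcd, hc⟩
  have hSd : BddAbove S := ⟨d, fun _ hx => hx.1⟩
  have hsup_le : sSup S ≤ d := csSup_le hS fun _ hx => hx.1
  have hle_map : sSup S ≤ a (sSup S) := csSup_le hS fun x hx => hx.2.trans (ha (le_csSup hSd hx))
  have hmap_mem : a (sSup S) ∈ S := ⟨(ha hsup_le).trans hd, ha hle_map⟩
  exact ⟨sSup S, le_antisymm (le_csSup hSd hmap_mem) hle_map⟩

namespace CircleDeg1Lift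

theorem mem_closure_image_sub_of_translationNumber_eq (f : CircleDeg1Lift) {m : ℝ}
    (h : f.translationNumber = m) : m ∈ closure ((fun x => f x - x) '' Icc 0 1) := by
  rw [Metric.mem_closure_iff]
  by_contra! hfar
  obtain ⟨ε, hε, hfar⟩ := hfar
  have hgap : ∀ x, ε ≤ |f x - x - m| :=
    f.forall_map_sub_of_Icc (fun v => ε ≤ |v - m|) fun x hx => by
      have := hfar _ ⟨x, hx, rfl⟩
      rwa [Real.dist_eq, abs_sub_comm] at this
  by_cases hup : ∃ c, c + m ≤ f c
  · by_cases hdown : ∃ d, f d ≤ d + m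
    · obtain ⟨c, hc⟩ := hup
      obtain ⟨d, hd⟩ := hdown
      have hd' : f (d + ⌈c - d⌉) ≤ d + ⌈c - d⌉ + m := by rw [f.map_add_int]; linarith
      have hcd : c ≤ d + ⌈c - d⌉ := by linarith [Int.le_ceil (c - d)]
      obtain ⟨x, hx⟩ := (f.monotone.add_const (-m)).exists_isFixedPt_of_le_of_map_le hcd
        (by linarith) (by linarith)
      have := hgap x
      rw [show f x - x - m = 0 by simp only [IsFixedPt] at hx; linarith, abs_zero] at this
      linarith
    · simp only [not_exists, not_le] at hdown
      have hadd : ∀ x, x + (m + ε) ≤ f x := fun x => by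
        have := hgap x
        rw [abs_of_pos (by linarith [hdown x])] at this
        linarith
      linarith [f.le_translationNumber_of_add_le hadd]
  · simp only [not_exists, not_le] at hup
    have hadd : ∀ x, f x ≤ x + (m - ε) := fun x => by
      have := hgap x
      rw [abs_of_neg (by linarith [hup x])] at this
      linarith
    linarith [f.translationNumber_le_of_le_add hadd]

theorem exists_chain_of_translationNumber_eq (f : CircleDeg1Lift) {R : Set (ℝ × ℝ)}
    (hR : IsClosed R) (hfR : ∀ x, (x, f x) ∈ R) {p : ℝ} {q : ℕ} (hq : q ≠ 0)
    (h : f.translationNumber = p / q) :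
    ∃ z : ℕ → ℝ, (∀ i, (z i, z (i + 1)) ∈ R) ∧ z q = z 0 + p := by
  have hτq : (f ^ q).translationNumber = p := by
    rw [translationNumber_pow, h]
    field_simp
  obtain ⟨v, hv, hvp⟩ :=
    mem_closure_iff_seq_limit.1 ((f ^ q).mem_closure_image_sub_of_translationNumber_eq hτq)
  choose u hu huv using hv
  have horbit : ∀ n, (fun i => f^[i] (u n)) ∈ Icc (fun i => f^[i] 0) fun i => f^[i] 1 :=
    fun n => ⟨fun i => f.monotone.iterate i (hu n).1, fun i => f.monotone.iterate i (hu n).2⟩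
  obtain ⟨z, -, φ, hφ, hz⟩ := isCompact_Icc.tendsto_subseq horbit
  have hzi : ∀ i, Tendsto (fun n => f^[i] (u (φ n))) atTop (𝓝 (z i)) := tendsto_pi_nhds.1 hz
  refine ⟨z, fun i => hR.mem_of_tendsto ((hzi i).prodMk_nhds (hzi (i + 1)))
    (Eventually.of_forall fun n => ?_), ?_⟩
  · simpa only [iterate_succ_apply'] using hfR _
  · rw [← sub_eq_iff_eq_add']
    refine tendsto_nhds_unique ((hzi q).sub (hzi 0)) ?_
    convert hvp.comp hφ.tendsto_atTop using 1
    ext n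
    simp [← huv, coe_pow]

end CircleDeg1Lift

theorem exists_periodic_of_chain {R : Set (ℝ × ℝ)} {p : ℝ}
    (hR : ∀ x y, (x, y) ∈ R → (x + p, y + p) ∈ R) {q : ℕ} (hq : q ≠ 0) {z : ℕ → ℝ}
    (hz : ∀ i < q, (z i, z (i + 1)) ∈ R) (hzq : z q = z 0 + p) :
    ∃ y : ℕ → ℝ, (∀ i, (y i, y (i + 1)) ∈ R) ∧ ∀ i k : ℕ, y (k * q + i) = y i + k * p := by
  have hRk : ∀ k : ℕ, ∀ x y, (x, y) ∈ R → (x + k * p, y + k * p) ∈ R := by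
    intro k
    induction k with
    | zero => simp
    | succ k ih =>
      intro x y hxy
      simpa [add_mul, add_assoc] using hR _ _ (ih x y hxy)
  have hq0 : 0 < q := Nat.pos_of_ne_zero hq
  set y : ℕ → ℝ := fun i => z (i % q) + (i / q : ℕ) * p
  have hy_lt : ∀ k r, r < q → y (k * q + r) = z r + k * p := fun k r hr => by
    simp [y, Nat.mod_eq_of_lt hr, add_comm (k * q), Nat.add_mul_div_right _ _ hq0,
      Nat.div_eq_of_lt hr]
  have hy : ∀ k r, r ≤ q → y (k * q + r) = z r + k * p := by
    intro k r hr
    rcases hr.lt_or_eq with hr | rfl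
    · exact hy_lt k r hr
    · have := hy_lt (k + 1) 0 hq0
      rw [add_zero, add_one_mul] at this
      rw [this, hzq]
      push_cast
      ring
  refine ⟨y, fun i => ?_, fun i k => ?_⟩
  · obtain ⟨k, r, hr, rfl⟩ : ∃ k r, r < q ∧ k * q + r = i :=
      ⟨i / q, i % q, Nat.mod_lt i hq0, Nat.div_add_mod' i q⟩
    rw [add_assoc, hy k r hr.le, hy k (r + 1) hr]
    exact hRk k _ _ (hz r hr)
  · obtain ⟨j, r, hr, rfl⟩ : ∃ j r, r < q ∧ j * q + r = i :=
      ⟨i / q, i % q, Nat.mod_lt i hq0, Nat.div_add_mod' i q⟩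
    rw [← add_assoc, ← add_mul, hy_lt _ _ hr, hy_lt _ _ hr]
    push_cast
    ring

theorem eq_neg_div_of_tendsto_of_add_mul {y : ℕ → ℝ} {L p : ℝ} {q : ℕ} (hq : q ≠ 0)
    (hy : Tendsto (fun i : ℕ => (y 0 - y i) / i) atTop (𝓝 L))
    (hper : ∀ k : ℕ, y (k * q) = y 0 + k * p) : L = -(p / q) := by
  refine tendsto_nhds_unique (hy.comp (tendsto_id.atTop_mul_const' (Nat.pos_of_ne_zero hq)))
    (tendsto_const_nhds.congr' ?_)
  filter_upwards [eventually_ne_atTop 0] with k hk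
  simp only [comp_apply, id_eq, hper]
  push_cast
  field_simp
  ring

namespace LinearizedScheme

variable {W : ℝ → ℝ} {γ T : ℝ}

variable (W γ T) in
def minimizers (x : ℝ) : Set ℝ :=
  {m | ∀ t, T * m + W m + γ / 2 * (m - x) ^ 2 ≤ T * t + W t + γ / 2 * (t - x) ^ 2}

theorem isOrbit_iff {y : ℕ → ℝ} : IsOrbit W γ T y ↔ ∀ i, y (i + 1) ∈ minimizers W γ T (y i) :=
  Iff.rfl

theorem isClosed_minimizers_graph (hW : Continuous W) :
    IsClosed {z : ℝ × ℝ | z.2 ∈ minimizers W γ T z.1} := by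
  show IsClosed {z : ℝ × ℝ | ∀ t : ℝ, _}
  rw [ofPred_forall]
  exact isClosed_iInter fun t => isClosed_le (by fun_prop) (by fun_prop)

theorem isClosed_minimizers (hW : Continuous W) (x : ℝ) : IsClosed (minimizers W γ T x) :=
  (isClosed_minimizers_graph hW).preimage (Continuous.prodMk_right x)

theorem minimizers_nonempty {K : NNReal} (hW : LipschitzWith K W) (hγ : 0 < γ) (x : ℝ) :
    (minimizers W γ T x).Nonempty := by
  set F : ℝ → ℝ := fun t => T * t + W t + γ / 2 * (t - x) ^ 2
  have hF : Continuous F := by have := hW.continuous; fun_prop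
  have hlower : ∀ t, F x + dist t x * (γ / 2 * dist t x - (|T| + K)) ≤ F t := by
    intro t
    have hWt : W x - K * dist t x ≤ W t := by
      have := (abs_le.1 ((hW.dist_le_mul t x).trans_eq' (Real.dist_eq _ _).symm)).1
      linarith
    have hTt : T * x - |T| * dist t x ≤ T * t := by
      have := neg_abs_le (T * (t - x))
      rw [abs_mul, ← Real.dist_eq] at this
      linarith
    have hsq : dist t x ^ 2 = (t - x) ^ 2 := by rw [Real.dist_eq, sq_abs]
    simp only [F]
    nlinarith
  have hcoercive : Tendsto F (cocompact ℝ) atTop := by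
    refine tendsto_atTop_mono hlower (tendsto_atTop_add_const_left _ _ ?_)
    have hd := tendsto_dist_right_cocompact_atTop x
    exact hd.atTop_mul_atTop₀
      (tendsto_atTop_add_const_right _ _ (hd.const_mul_atTop (by positivity)))
  exact hF.exists_forall_le hcoercive

theorem le_of_mem_minimizers_of_lt (hγ : 0 < γ) {x x' m m' : ℝ} (hm : m ∈ minimizers W γ T x)
    (hm' : m' ∈ minimizers W γ T x') (hxx' : x < x') : m ≤ m' := by
  by_contra! h
  nlinarith [hm m', hm' m, mul_pos hγ (mul_pos (sub_pos.2 h) (sub_pos.2 hxx'))]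

theorem add_int_mem_minimizers (hper : Periodic W 1) {x m : ℝ}
    (hm : m ∈ minimizers W γ T x) (n : ℤ) : m + n ∈ minimizers W γ T (x + n) := by
  intro t
  have hn := hper.int_mul n
  rw [mul_one] at hn
  have h := hm (t - n)
  rw [hn.sub_eq] at h
  rw [hn m]
  linarith

variable (W γ T) in
noncomputable def leastMinimizer (x : ℝ) : ℝ :=
  sInf (minimizers W γ T x)

section LeastMinimizer

variable {K : NNReal}

theorem bddBelow_minimizers (hW : LipschitzWith K W) (hγ : 0 < γ) (x : ℝ) :
    BddBelow (minimizers W γ T x) :=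
  let ⟨m, hm⟩ := minimizers_nonempty hW hγ (x - 1)
  ⟨m, fun _ hm' => le_of_mem_minimizers_of_lt hγ hm hm' (sub_one_lt x)⟩

theorem leastMinimizer_mem (hW : LipschitzWith K W) (hγ : 0 < γ) (x : ℝ) :
    leastMinimizer W γ T x ∈ minimizers W γ T x :=
  (isClosed_minimizers hW.continuous x).csInf_mem (minimizers_nonempty hW hγ x)
    (bddBelow_minimizers hW hγ x)

theorem monotone_leastMinimizer (hW : LipschitzWith K W) (hγ : 0 < γ) :
    Monotone (leastMinimizer W γ T) := by
  intro x x' hxx'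
  rcases hxx'.lt_or_eq with hlt | rfl
  · exact le_of_mem_minimizers_of_lt hγ (leastMinimizer_mem hW hγ x)
      (leastMinimizer_mem hW hγ x') hlt
  · rfl

theorem leastMinimizer_add_int (hW : LipschitzWith K W) (hγ : 0 < γ) (hper : Periodic W 1)
    (x : ℝ) (n : ℤ) :
    leastMinimizer W γ T (x + n) = leastMinimizer W γ T x + n := by
  refine le_antisymm (csInf_le (bddBelow_minimizers hW hγ _)
    (add_int_mem_minimizers hper (leastMinimizer_mem hW hγ x) n)) ?_
  have h := add_int_mem_minimizers hper (leastMinimizer_mem (T := T) hW hγ (x + n)) (-n)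
  push_cast at h
  rw [add_neg_cancel_right] at h
  have hle : leastMinimizer W γ T x ≤ leastMinimizer W γ T (x + n) + -n :=
    csInf_le (bddBelow_minimizers hW hγ x) h
  linarith

noncomputable def leastMinimizerLift (hW : LipschitzWith K W) (hγ : 0 < γ) (hper : Periodic W 1) :
    CircleDeg1Lift where
  toFun := leastMinimizer W γ T
  monotone' := monotone_leastMinimizer hW hγ
  map_add_one' x := by exact_mod_cast leastMinimizer_add_int hW hγ hper x 1

end LeastMinimizer

end LinearizedScheme

open LinearizedScheme

theorem stmt_11_general (W : ℝ → ℝ) (hper : Function.Periodic W 1)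
    (hlip : LipschitzWith 1 W)
    (γ : ℝ) (hγ : 0 < γ) (T : ℝ)
    (fγ : ℝ → ℝ)
    (hfγ : ∀ T' : ℝ, ∀ y : ℕ → ℝ, IsOrbit W γ T' y →
      Filter.Tendsto (fun i : ℕ => (y 0 - y i) / (i : ℝ)) Filter.atTop (nhds (fγ T')))
    (p : ℤ) (q : ℕ) (hq : q ≠ 0) :
    (∃ y : ℕ → ℝ, IsOrbit W γ T y ∧
      ∀ i k : ℕ, y (k * q + i) = y i + (k : ℝ) * (p : ℝ)) ↔
    fγ T = -((p : ℝ) / (q : ℝ)) := by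
  constructor
  · rintro ⟨y, hy, hyper⟩
    exact eq_neg_div_of_tendsto_of_add_mul hq (hfγ T y hy) fun k => hyper 0 k
  · intro hfT
    set f := leastMinimizerLift (T := T) hlip hγ hper
    have hf : ∀ x, f x ∈ minimizers W γ T x := leastMinimizer_mem hlip hγ
    have horbit : IsOrbit W γ T fun n => (f ^ n) 0 := isOrbit_iff.2 fun n => by
      rw [pow_succ', CircleDeg1Lift.mul_apply]
      exact hf _
    have hτ : f.translationNumber = p / q := by
      refine tendsto_nhds_unique (f.tendsto_translationNumber 0) ?_
      rw [← neg_neg ((p : ℝ) / q), ← hfT]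
      refine (hfγ T _ horbit).neg.congr fun n => ?_
      simp [neg_div]
    obtain ⟨z, hz, hzq⟩ := f.exists_chain_of_translationNumber_eq
      (isClosed_minimizers_graph hlip.continuous) hf hq hτ
    exact exists_periodic_of_chain (fun x y hxy => add_int_mem_minimizers hper hxy p) hq
      (fun i _ => hz i) hzq

theorem stmt_11 (W : ℝ → ℝ) (hper : Function.Periodic W 1) (heven : ∀ x : ℝ, W (-x) = W x)
    (hlip : LipschitzWith 1 W)
    (γ : ℝ) (hγ : 0 < γ) (T : ℝ) (hT : 0 < T)
    (fγ : ℝ → ℝ)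
    (hfγ : ∀ T' : ℝ, ∀ y : ℕ → ℝ, IsOrbit W γ T' y →
      Filter.Tendsto (fun i : ℕ => (y 0 - y i) / (i : ℝ)) Filter.atTop (nhds (fγ T')))
    (p : ℤ) (q : ℕ) (hq : q ≠ 0) :
    (∃ y : ℕ → ℝ, IsOrbit W γ T y ∧
      ∀ i k : ℕ, y (k * q + i) = y i + (k : ℝ) * (p : ℝ)) ↔
    fγ T = -((p : ℝ) / (q : ℝ)) :=
  stmt_11_general W hper hlip γ hγ T fγ hfγ p q hq
end

section
/- Let h : ℝ → [0,∞) be strictly convex with its global minimum at 0, let W : ℝ → ℝ be a 1-periodic, even, Lipschitz function with Lipschitz constant 1, let γ > 0 and set τ_ε = ε/γ. For each ε > 0 define recursively x₀^ε = x₀ and x_{i+1}^ε a global minimizer over ℝ of x ↦ h(x) + ε·W(x/ε) + (1/(2τ_ε))(x − x_i^ε)², and let x^ε(t) = x^ε_{⌊t/τ_ε⌋}. Suppose ε_n → 0⁺ and x^{ε_n} converges to a function x : [0,∞) → ℝ uniformly on compact subsets of [0,∞), and that x is differentiable at a time t₀ ≥ 0. Then γ·f_γ(h'_−(x(t₀)))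 ≤ −x'(t₀) ≤ γ·f_γ(h'_+(x(t₀))), where h'_− and h'_+ denote the left and right derivatives of the convex function h. -/
namespace Homog

/-- the one-step energy of the linearized scheme -/
noncomputable def psi (W : ℝ → ℝ) (γ T a z : ℝ) : ℝ := T * z + W z + γ / 2 * (z - a) ^ 2

/-- set of global minimizers -/
def minset (W : ℝ → ℝ) (γ T a : ℝ) : Set ℝ := {z | ∀ t, psi W γ T a z ≤ psi W γ T a t}

variable {W : ℝ → ℝ} {γ : ℝ}

lemma psi_eq (hγ : 0 < γ) (T a z : ℝ) :
    psi W γ T a z = W z + γ / 2 * (z - (a - T / γ)) ^ 2 + (T * a - T ^ 2 / (2 * γ)) := by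
  have h : γ ≠ 0 := ne_of_gt hγ
  unfold psi; field_simp; ring

lemma psi_continuous (hlip : LipschitzWith 1 W) (T a : ℝ) :
    Continuous (psi W γ T a) := by
  unfold psi
  exact ((continuous_const.mul continuous_id).add hlip.continuous).add
    (continuous_const.mul ((continuous_id.sub continuous_const).pow 2))

lemma lipbound (hlip : LipschitzWith 1 W) (p q : ℝ) : W p - W q ≤ |p - q| := by
  have := hlip.dist_le_mul p q
  rw [Real.dist_eq, Real.dist_eq] at this
  have h2 : W p - W q ≤ |W p - W q| := le_abs_self _
  simpa using h2.trans this

lemma minset_nonempty (hγ : 0 < γ) (hlip : LipschitzWith 1 W) (T a : ℝ) :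
    (minset W γ T a).Nonempty := by
  set c := a - T / γ with hc
  obtain ⟨m, hm, hmin⟩ := (isCompact_Icc (a := c - 2/γ) (b := c + 2/γ)).exists_isMinOn
    ⟨c, by constructor <;> nlinarith [div_pos (by norm_num : (0:ℝ) < 2) hγ]⟩
    ((psi_continuous hlip T a).continuousOn)
  refine ⟨m, fun t => ?_⟩
  rcases le_or_gt (|t - c|) (2/γ) with ht | ht
  · rw [abs_le] at ht
    exact hmin ⟨by linarith [ht.1], by linarith [ht.2]⟩
  · have h1 : psi W γ T a m ≤ psi W γ T a c := hmin
      ⟨by linarith [le_of_lt (div_pos (by norm_num : (0:ℝ) < 2) hγ)],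
       by linarith [le_of_lt (div_pos (by norm_num : (0:ℝ) < 2) hγ)]⟩
    have h2 : psi W γ T a c ≤ psi W γ T a t := by
      rw [psi_eq hγ, psi_eq hγ]
      have hW : W c - W t ≤ |t - c| := by
        have := lipbound hlip c t; rwa [abs_sub_comm] at this
      have h0 : (0:ℝ) < 2/γ := div_pos (by norm_num) hγ
      have hkey : 2 ≤ γ * |t - c| := by
        rw [div_lt_iff₀ hγ] at ht; nlinarith
      simp only [← hc]
      have hsq : |t - c| * |t - c| = (t - c) ^ 2 := by rw [← sq_abs]; ring
      have h2 : |t - c| ≤ γ / 2 * (t - c) ^ 2 := by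
        calc |t - c| = 2 * |t - c| / 2 := by ring
          _ ≤ γ * |t - c| * |t - c| / 2 := by
              linarith [mul_le_mul_of_nonneg_right hkey (abs_nonneg (t - c))]
          _ = γ / 2 * (t - c) ^ 2 := by rw [mul_assoc, hsq]; ring
      have hcc : ((c : ℝ) - c) ^ 2 = 0 := by ring
      rw [hcc]
      linarith
    exact h1.trans h2
  
lemma minset_subset (hγ : 0 < γ) (hlip : LipschitzWith 1 W) (T a : ℝ) :
    minset W γ T a ⊆ Set.Icc (a - T/γ - 2/γ) (a - T/γ + 2/γ) := by
  intro z hz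
  set c := a - T / γ with hc
  by_contra hout
  have h0 : (0:ℝ) < 2/γ := div_pos (by norm_num) hγ
  have habs : 2/γ < |z - c| := by
    simp only [Set.mem_Icc, not_and_or, not_le] at hout
    rw [lt_abs]
    rcases hout with h | h
    · right; linarith
    · left; linarith
  have h1 : psi W γ T a z ≤ psi W γ T a c := hz c
  rw [psi_eq hγ, psi_eq hγ] at h1
  have hW : W c - W z ≤ |z - c| := by
    have := lipbound hlip c z; rwa [abs_sub_comm] at this
  have hkey : 2 < γ * |z - c| := by
    rw [div_lt_iff₀ hγ] at habs; nlinarith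
  simp only [← hc] at h1
  have h3 : 0 < |z - c| := lt_trans h0 habs
  have hsq : |z - c| * |z - c| = (z - c) ^ 2 := by rw [← sq_abs]; ring
  have h2 : |z - c| < γ / 2 * (z - c) ^ 2 := by
    calc |z - c| = 2 * |z - c| / 2 := by ring
      _ < γ * |z - c| * |z - c| / 2 := by
          linarith [mul_lt_mul_of_pos_right hkey h3]
      _ = γ / 2 * (z - c) ^ 2 := by rw [mul_assoc, hsq]; ring
  have hcc : ((c : ℝ) - c) ^ 2 = 0 := by ring
  rw [hcc] at h1
  linarith

lemma minset_closed (hlip : LipschitzWith 1 W) (T a : ℝ) : IsClosed (minset W γ T a) := by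
  have : minset W γ T a = ⋂ t, {z | psi W γ T a z ≤ psi W γ T a t} := by
    ext z; simp [minset, Set.mem_iInter]
  rw [this]
  exact isClosed_iInter fun t => isClosed_le (psi_continuous hlip T a) continuous_const

/-- maximal minimizer -/
noncomputable def Mz (W : ℝ → ℝ) (γ T a : ℝ) : ℝ := sSup (minset W γ T a)

lemma Mz_mem (hγ : 0 < γ) (hlip : LipschitzWith 1 W) (T a : ℝ) :
    Mz W γ T a ∈ minset W γ T a :=
  (minset_closed hlip T a).csSup_mem (minset_nonempty hγ hlip T a)
    (BddAbove.mono (minset_subset hγ hlip T a) (bddAbove_Icc))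

lemma Mz_le_of_mem (hγ : 0 < γ) (hlip : LipschitzWith 1 W) {T a z : ℝ}
    (hz : z ∈ minset W γ T a) : z ≤ Mz W γ T a :=
  le_csSup (BddAbove.mono (minset_subset hγ hlip T a) (bddAbove_Icc)) hz

lemma Mz_bounds (hγ : 0 < γ) (hlip : LipschitzWith 1 W) (T a : ℝ) :
    Mz W γ T a ∈ Set.Icc (a - T/γ - 2/γ) (a - T/γ + 2/γ) :=
  minset_subset hγ hlip T a (Mz_mem hγ hlip T a)


lemma Mz_mono (hγ : 0 < γ) (hlip : LipschitzWith 1 W) (T : ℝ) {a b : ℝ} (hab : a ≤ b) :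
    Mz W γ T a ≤ Mz W γ T b := by
  rcases eq_or_lt_of_le hab with rfl | hab
  · exact le_refl _
  by_contra hlt
  push_neg at hlt
  set u := Mz W γ T a
  set M := Mz W γ T b
  have h1 : psi W γ T a u ≤ psi W γ T a M := Mz_mem hγ hlip T a M
  have h2 : psi W γ T b M ≤ psi W γ T b u := Mz_mem hγ hlip T b u
  unfold psi at h1 h2
  nlinarith [mul_pos (mul_pos hγ (sub_pos.2 hab)) (sub_pos.2 hlt)]

lemma Mz_anti (hγ : 0 < γ) (hlip : LipschitzWith 1 W) {T T' : ℝ} (a : ℝ) (hTT : T' ≤ T) :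
    Mz W γ T a ≤ Mz W γ T' a := by
  rcases eq_or_lt_of_le hTT with rfl | hTT
  · exact le_refl _
  by_contra hlt
  push_neg at hlt
  set u := Mz W γ T a
  set M := Mz W γ T' a
  have h1 : psi W γ T a u ≤ psi W γ T a M := Mz_mem hγ hlip T a M
  have h2 : psi W γ T' a M ≤ psi W γ T' a u := Mz_mem hγ hlip T' a u
  unfold psi at h1 h2
  nlinarith [mul_pos (sub_pos.2 hTT) (sub_pos.2 hlt)]

lemma mem_minset_add_one (hper : Function.Periodic W 1) {T a z : ℝ}
    (hz : z ∈ minset W γ T a) : z + 1 ∈ minset W γ T (a + 1) := by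
  intro t
  have key : ∀ s : ℝ, psi W γ T (a + 1) (s + 1) = psi W γ T a s + T := by
    intro s; unfold psi; rw [hper s]; ring
  have := hz (t - 1)
  have h2 := key z
  have h3 := key (t - 1)
  rw [sub_add_cancel] at h3
  linarith

lemma mem_minset_sub_one (hper : Function.Periodic W 1) {T a z : ℝ}
    (hz : z ∈ minset W γ T (a + 1)) : z - 1 ∈ minset W γ T a := by
  intro t
  have key : ∀ s : ℝ, psi W γ T (a + 1) (s + 1) = psi W γ T a s + T := by
    intro s; unfold psi; rw [hper s]; ring
  have := hz (t + 1)
  have h2 := key (z - 1)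
  rw [sub_add_cancel] at h2
  have h3 := key t
  linarith

lemma Mz_add_one (hγ : 0 < γ) (hper : Function.Periodic W 1) (hlip : LipschitzWith 1 W)
    (T a : ℝ) : Mz W γ T (a + 1) = Mz W γ T a + 1 := by
  have h1 : Mz W γ T a + 1 ≤ Mz W γ T (a + 1) :=
    Mz_le_of_mem hγ hlip (mem_minset_add_one hper (Mz_mem hγ hlip T a))
  have h2 : Mz W γ T (a + 1) - 1 ≤ Mz W γ T a :=
    Mz_le_of_mem hγ hlip (mem_minset_sub_one hper (Mz_mem hγ hlip T (a + 1)))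
  linarith

lemma Mz_add_int (hγ : 0 < γ) (hper : Function.Periodic W 1) (hlip : LipschitzWith 1 W)
    (T a : ℝ) (k : ℤ) : Mz W γ T (a + k) = Mz W γ T a + k := by
  induction k using Int.induction_on with
  | zero => simp
  | succ n ih =>
      have := Mz_add_one hγ hper hlip T (a + n)
      push_cast
      push_cast at ih
      rw [show a + ((n : ℝ) + 1) = a + n + 1 by ring, this, ih]; ring
  | pred n ih =>
      have := Mz_add_one hγ hper hlip T (a + (-(n:ℝ) - 1))
      push_cast
      push_cast at ih
      rw [show a + (-(n : ℝ) - 1) + 1 = a + -(n:ℝ) by ring] at this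
      rw [show a + (-(n:ℝ) - 1) = a + (-(n:ℝ)- 1) by ring]
      have h2 : Mz W γ T (a + (-(n:ℝ) - 1)) = Mz W γ T (a + -(n:ℝ)) - 1 := by linarith
      rw [h2, ih]; ring

lemma Fq_mono (hγ : 0 < γ) (hlip : LipschitzWith 1 W) (T : ℝ) (q : ℕ) :
    Monotone ((Mz W γ T)^[q]) :=
  Monotone.iterate (fun _ _ hab => Mz_mono hγ hlip T hab) q

lemma Fq_add_int (hγ : 0 < γ) (hper : Function.Periodic W 1) (hlip : LipschitzWith 1 W)
    (T a : ℝ) (k : ℤ) (q : ℕ) : (Mz W γ T)^[q] (a + k) = (Mz W γ T)^[q] a + k := by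
  induction q with
  | zero => simp
  | succ n ih =>
      rw [Function.iterate_succ_apply', Function.iterate_succ_apply', ih,
        Mz_add_int hγ hper hlip T _ k]

/-- start-point independence of displacement, up to 1 -/
lemma Fq_compare (hγ : 0 < γ) (hper : Function.Periodic W 1) (hlip : LipschitzWith 1 W)
    (T : ℝ) (q : ℕ) (a b : ℝ) :
    (Mz W γ T)^[q] b - b ≤ (Mz W γ T)^[q] a - a + 1 := by
  set k : ℤ := ⌈b - a⌉
  have hk1 : (b - a : ℝ) ≤ k := Int.le_ceil _
  have hk2 : (k : ℝ) < b - a + 1 := Int.ceil_lt_add_one _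
  have h1 : (Mz W γ T)^[q] b ≤ (Mz W γ T)^[q] (a + k) :=
    Fq_mono hγ hlip T q (by linarith)
  rw [Fq_add_int hγ hper hlip T a k q] at h1
  linarith

lemma isOrbit_Fq (hγ : 0 < γ) (hlip : LipschitzWith 1 W) (T a : ℝ) :
    IsOrbit W γ T (fun i => (Mz W γ T)^[i] a) := by
  intro i t
  have h := Mz_mem hγ hlip T ((Mz W γ T)^[i] a) t
  unfold psi at h
  simpa [Function.iterate_succ_apply'] using h

lemma Fq_anti (hγ : 0 < γ) (hlip : LipschitzWith 1 W) {T T' : ℝ} (hTT : T' ≤ T) (a : ℝ)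
    (q : ℕ) : (Mz W γ T)^[q] a ≤ (Mz W γ T')^[q] a := by
  induction q with
  | zero => simp
  | succ n ih =>
      rw [Function.iterate_succ_apply', Function.iterate_succ_apply']
      exact (Mz_mono hγ hlip T ih).trans (Mz_anti hγ hlip _ hTT)

section Drift

variable (fγ : ℝ → ℝ)

/-- uniform upper bound on displacement of the maximal orbit -/
lemma drift_upper (hγ : 0 < γ) (hper : Function.Periodic W 1) (hlip : LipschitzWith 1 W)
    (hfγ : ∀ T : ℝ, ∀ y : ℕ → ℝ, IsOrbit W γ T y →
      Filter.Tendsto (fun i : ℕ => (y 0 - y i) / (i : ℝ)) Filter.atTop (nhds (fγ T)))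
    (T δ : ℝ) (hδ : 0 < δ) :
    ∃ q₁ : ℕ, 0 < q₁ ∧ ∀ q : ℕ, q₁ ≤ q → ∀ a : ℝ,
      (Mz W γ T)^[q] a - a ≤ -(q : ℝ) * fγ T + q * δ + 1 := by
  have horb := hfγ T _ (isOrbit_Fq hγ hlip T 0)
  have hev : ∀ᶠ q : ℕ in Filter.atTop,
      fγ T - δ < (((Mz W γ T)^[0] 0) - (Mz W γ T)^[q] 0) / (q : ℝ) :=
    horb.eventually (eventually_gt_nhds (by linarith))
  obtain ⟨q₀, hq₀⟩ := Filter.eventually_atTop.1 hev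
  refine ⟨max q₀ 1, lt_of_lt_of_le one_pos (le_max_right _ _), fun q hq a => ?_⟩
  have hq1 : 1 ≤ q := le_trans (le_max_right _ _) hq
  have hqpos : (0 : ℝ) < q := by exact_mod_cast hq1
  have h0 := hq₀ q (le_trans (le_max_left _ _) hq)
  simp only [Function.iterate_zero_apply] at h0
  have h1 : (Mz W γ T)^[q] 0 ≤ -(q : ℝ) * (fγ T - δ) := by
    rw [lt_div_iff₀ hqpos] at h0
    nlinarith
  have h2 := Fq_compare hγ hper hlip T q 0 a
  rw [sub_zero] at h2
  nlinarith

/-- monotonicity of the homogenised velocity -/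
lemma fγ_mono (hγ : 0 < γ) (hlip : LipschitzWith 1 W)
    (hfγ : ∀ T : ℝ, ∀ y : ℕ → ℝ, IsOrbit W γ T y →
      Filter.Tendsto (fun i : ℕ => (y 0 - y i) / (i : ℝ)) Filter.atTop (nhds (fγ T)))
    {T T' : ℝ} (hTT : T' ≤ T) : fγ T' ≤ fγ T := by
  have h1 := hfγ T _ (isOrbit_Fq hγ hlip T 0)
  have h2 := hfγ T' _ (isOrbit_Fq hγ hlip T' 0)
  refine le_of_tendsto_of_tendsto' h2 h1 (fun q => ?_)
  have := Fq_anti hγ hlip hTT 0 q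
  have hqpos : (0:ℝ) ≤ q := Nat.cast_nonneg q
  apply div_le_div_of_nonneg_right ?_ hqpos
  simp only [Function.iterate_zero_apply]
  linarith

/-- one-sided joint continuity of the maximal minimizer map -/
lemma Mz_cont (hγ : 0 < γ) (hlip : LipschitzWith 1 W) (T b θ : ℝ) (hθ : 0 < θ) :
    ∃ σ : ℝ, 0 < σ ∧ ∀ T' b' : ℝ, T - σ ≤ T' → T' ≤ T → b ≤ b' → b' ≤ b + σ →
      Mz W γ T' b' ≤ Mz W γ T b + θ := by
  by_contra hcon
  push_neg at hcon
  set w : ℕ → ℝ := fun k => Mz W γ (T - 1/((k:ℝ)+1)) (b + 1/((k:ℝ)+1)) with hw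
  have hkpos : ∀ k : ℕ, (0:ℝ) < 1/((k:ℝ)+1) := fun k => by positivity
  have hwgt : ∀ k, Mz W γ T b + θ < w k := by
    intro k
    obtain ⟨T', b', h1, h2, h3, h4, h5⟩ := hcon (1/((k:ℝ)+1)) (hkpos k)
    calc Mz W γ T b + θ < Mz W γ T' b' := h5
      _ ≤ Mz W γ T' (b + 1/((k:ℝ)+1)) := Mz_mono hγ hlip _ h4
      _ ≤ Mz W γ (T - 1/((k:ℝ)+1)) (b + 1/((k:ℝ)+1)) := Mz_anti hγ hlip _ h1
  have hanti : Antitone w := by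
    intro k l hkl
    have hcast : ((k:ℝ)+1) ≤ ((l:ℝ)+1) := by exact_mod_cast Nat.succ_le_succ hkl
    have h1 : (1:ℝ)/((l:ℝ)+1) ≤ 1/((k:ℝ)+1) :=
      one_div_le_one_div_of_le (by positivity) hcast
    calc w l ≤ Mz W γ (T - 1/((l:ℝ)+1)) (b + 1/((k:ℝ)+1)) :=
          Mz_mono hγ hlip _ (by linarith)
      _ ≤ Mz W γ (T - 1/((k:ℝ)+1)) (b + 1/((k:ℝ)+1)) := Mz_anti hγ hlip _ (by linarith)
  have hbdd : ∀ k, Mz W γ T b ≤ w k := fun k =>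
    (Mz_mono hγ hlip T (le_of_lt (lt_add_of_pos_right b (hkpos k)))).trans
      (Mz_anti hγ hlip _ (by linarith [hkpos k]))
  have hconv : Filter.Tendsto w Filter.atTop (nhds (⨅ k, w k)) :=
    tendsto_atTop_ciInf hanti ⟨Mz W γ T b, by rintro x ⟨k, rfl⟩; exact hbdd k⟩
  set wl := ⨅ k, w k with hwl
  have ht1 : Filter.Tendsto (fun k : ℕ => 1/((k:ℝ)+1)) Filter.atTop (nhds 0) :=
    tendsto_one_div_add_atTop_nhds_zero_nat
  have hT : Filter.Tendsto (fun k : ℕ => T - 1/((k:ℝ)+1)) Filter.atTop (nhds T) := by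
    simpa using tendsto_const_nhds.sub ht1
  have hB : Filter.Tendsto (fun k : ℕ => b + 1/((k:ℝ)+1)) Filter.atTop (nhds b) := by
    simpa using tendsto_const_nhds.add ht1
  have key : ∀ (u : ℕ → ℝ) (ul : ℝ), Filter.Tendsto u Filter.atTop (nhds ul) →
      Filter.Tendsto (fun k : ℕ => psi W γ (T - 1/((k:ℝ)+1)) (b + 1/((k:ℝ)+1)) (u k))
        Filter.atTop (nhds (psi W γ T b ul)) := by
    intro u ul hu
    have hWc : Filter.Tendsto (fun k : ℕ => W (u k)) Filter.atTop (nhds (W ul)) :=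
      (hlip.continuous.tendsto ul).comp hu
    have h1 : Filter.Tendsto (fun k : ℕ => (T - 1/((k:ℝ)+1)) * u k) Filter.atTop
        (nhds (T * ul)) := hT.mul hu
    have h2 : Filter.Tendsto (fun k : ℕ => γ/2 * (u k - (b + 1/((k:ℝ)+1))) ^ 2)
        Filter.atTop (nhds (γ/2 * (ul - b) ^ 2)) :=
      tendsto_const_nhds.mul ((hu.sub hB).pow 2)
    unfold psi
    exact (h1.add hWc).add h2
  have hmem : wl ∈ minset W γ T b := by
    intro t
    exact le_of_tendsto_of_tendsto' (key w wl hconv) (key (fun _ => t) t tendsto_const_nhds)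
      (fun k => Mz_mem hγ hlip _ _ t)
  have h5 : wl ≤ Mz W γ T b := Mz_le_of_mem hγ hlip hmem
  have h6 : Mz W γ T b + θ ≤ wl := le_ciInf fun k => (hwgt k).le
  linarith

/-- one-sided continuity of iterates in the slope parameter -/
lemma Fq_cont (hγ : 0 < γ) (hlip : LipschitzWith 1 W) (T a : ℝ) (q : ℕ) (θ : ℝ) (hθ : 0 < θ) :
    ∃ σ : ℝ, 0 < σ ∧ ∀ T' : ℝ, T - σ ≤ T' → T' ≤ T →
      (Mz W γ T')^[q] a ≤ (Mz W γ T)^[q] a + θ := by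
  induction q generalizing θ with
  | zero => exact ⟨1, one_pos, fun T' _ _ => by simpa using hθ.le⟩
  | succ n ih =>
      obtain ⟨σ₂, hσ₂, h₂⟩ := Mz_cont hγ hlip T ((Mz W γ T)^[n] a) θ hθ
      obtain ⟨σ₁, hσ₁, h₁⟩ := ih σ₂ hσ₂
      refine ⟨min σ₁ σ₂, lt_min hσ₁ hσ₂, fun T' hT1 hT2 => ?_⟩
      have hb1 : (Mz W γ T)^[n] a ≤ (Mz W γ T')^[n] a := Fq_anti hγ hlip hT2 a n
      have hb2 : (Mz W γ T')^[n] a ≤ (Mz W γ T)^[n] a + σ₂ :=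
        h₁ T' (by have := min_le_left σ₁ σ₂; linarith) hT2
      rw [Function.iterate_succ_apply', Function.iterate_succ_apply']
      exact h₂ T' ((Mz W γ T')^[n] a)
        (by have := min_le_right σ₁ σ₂; linarith) hT2 hb1 hb2

/-- left-continuity of the homogenised velocity -/
lemma fγ_left_cont (hγ : 0 < γ) (hper : Function.Periodic W 1) (hlip : LipschitzWith 1 W)
    (fγ : ℝ → ℝ)
    (hfγ : ∀ T : ℝ, ∀ y : ℕ → ℝ, IsOrbit W γ T y →
      Filter.Tendsto (fun i : ℕ => (y 0 - y i) / (i : ℝ)) Filter.atTop (nhds (fγ T)))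
    (T δ : ℝ) (hδ : 0 < δ) :
    ∃ σ : ℝ, 0 < σ ∧ ∀ T' : ℝ, T - σ ≤ T' → T' ≤ T → fγ T - 3 * δ ≤ fγ T' := by
  -- choose q with good drift at slope T and 2/q ≤ δ
  have horb := hfγ T _ (isOrbit_Fq hγ hlip T 0)
  have hev : ∀ᶠ q : ℕ in Filter.atTop,
      fγ T - δ < (((Mz W γ T)^[0] 0) - (Mz W γ T)^[q] 0) / (q : ℝ) :=
    horb.eventually (eventually_gt_nhds (by linarith))
  obtain ⟨q₀, hq₀⟩ := Filter.eventually_atTop.1 hev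
  obtain ⟨q, hqq₀, hq2⟩ : ∃ q : ℕ, q₀ ≤ q ∧ 1 ≤ q ∧ (2:ℝ)/q ≤ δ := by
    obtain ⟨m, hm⟩ := exists_nat_gt (2/δ)
    refine ⟨max q₀ (max 1 m), le_max_left _ _, le_trans (le_max_left 1 m) (le_max_right _ _), ?_⟩
    have hmle : (m:ℝ) ≤ (max q₀ (max 1 m) : ℕ) := by
      exact_mod_cast le_trans (le_max_right 1 m) (le_max_right q₀ _)
    have h2δ : 0 < (2:ℝ)/δ := by positivity
    have hmpos : (0:ℝ) < m := lt_trans h2δ hm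
    rw [div_le_iff₀ (lt_of_lt_of_le hmpos hmle)]
    rw [div_lt_iff₀ hδ] at hm
    nlinarith
  obtain ⟨hq1, hq2⟩ := hq2
  have hqpos : (0:ℝ) < q := by exact_mod_cast hq1
  have hdrift : (Mz W γ T)^[q] 0 ≤ -(q:ℝ) * (fγ T - δ) := by
    have h0 := hq₀ q hqq₀
    simp only [Function.iterate_zero_apply] at h0
    rw [lt_div_iff₀ hqpos] at h0
    nlinarith
  obtain ⟨σ, hσ, hcont⟩ := Fq_cont hγ hlip T 0 q 1 one_pos
  refine ⟨σ, hσ, fun T' hT1 hT2 => ?_⟩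
  have hcq : (Mz W γ T')^[q] 0 ≤ -(q:ℝ) * (fγ T - δ) + 1 :=
    le_trans (hcont T' hT1 hT2) (by linarith)
  -- iterate blocks
  have hblock : ∀ k : ℕ, (Mz W γ T')^[q * (k+1)] 0 ≤
      (Mz W γ T')^[q * k] 0 + ((Mz W γ T')^[q] 0 + 1) := by
    intro k
    have hiter : (Mz W γ T')^[q * (k+1)] 0 = (Mz W γ T')^[q] ((Mz W γ T')^[q * k] 0) := by
      rw [show q * (k+1) = q + q * k by ring, Function.iterate_add_apply]
    have := Fq_compare hγ hper hlip T' q 0 ((Mz W γ T')^[q * k] 0)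
    simp only [Function.iterate_zero_apply, sub_zero] at this
    rw [hiter]; linarith
  have hsum : ∀ k : ℕ, (Mz W γ T')^[q * k] 0 ≤ (k : ℝ) * ((Mz W γ T')^[q] 0 + 1) := by
    intro k
    induction k with
    | zero => simp
    | succ m ihm =>
        have := hblock m
        push_cast
        push_cast at ihm
        linarith
  -- pass to the limit along the subsequence q*k
  have horb' := hfγ T' _ (isOrbit_Fq hγ hlip T' 0)
  have hsub : Filter.Tendsto (fun k : ℕ => q * k) Filter.atTop Filter.atTop :=
    Filter.tendsto_atTop_atTop_of_monotone (fun i j hij => Nat.mul_le_mul_left q hij)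
      (fun n => ⟨n, Nat.le_mul_of_pos_left n (by omega)⟩)
  have hcomp := horb'.comp hsub
  refine ge_of_tendsto hcomp ?_
  filter_upwards [Filter.eventually_ge_atTop 1] with k hk
  have hkpos : (0:ℝ) < k := by exact_mod_cast hk
  have hqknat : 0 < q * k := Nat.mul_pos (by omega) (by omega)
  have hqk : (0:ℝ) < ((q * k : ℕ) : ℝ) := by exact_mod_cast hqknat
  simp only [Function.comp_apply, Function.iterate_zero_apply]
  rw [le_div_iff₀ hqk]
  have hcast : ((q * k : ℕ) : ℝ) = (q:ℝ) * k := by push_cast; ring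
  rw [hcast]
  have h6 : (Mz W γ T')^[q * k] 0 ≤ (k:ℝ) * (-(q:ℝ) * (fγ T - δ) + 2) := by
    have h5 := hsum k; nlinarith
  have h7 : (2:ℝ) ≤ δ * q := by rw [div_le_iff₀ hqpos] at hq2; linarith
  calc (fγ T - 3*δ) * ((q:ℝ) * k) ≤ -((k:ℝ) * (-(q:ℝ) * (fγ T - δ) + 2)) := by nlinarith
    _ ≤ 0 - (Mz W γ T')^[q * k] 0 := by simp only [zero_sub]; linarith

end Drift

/-- cross comparison between the rescaled scheme and the linearized scheme -/
lemma cross (hγ : 0 < γ) (hlip : LipschitzWith 1 W) (E : ℝ → ℝ) {T A a b u : ℝ}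
    (hmono : ∀ p q : ℝ, A ≤ p → p ≤ q → E p - T * p ≤ E q - T * q)
    (hab : a ≤ b)
    (humin : ∀ t : ℝ, E u + W u + γ/2 * (u - a)^2 ≤ E t + W t + γ/2 * (t - a)^2)
    (huA : A ≤ u) (hMA : A ≤ Mz W γ T b) :
    u ≤ Mz W γ T b := by
  by_contra hlt
  push_neg at hlt
  have h1 : E u + W u + γ/2*(u - a)^2 ≤ E (Mz W γ T b) + W (Mz W γ T b)
      + γ/2*(Mz W γ T b - a)^2 := humin (Mz W γ T b)
  have h2 : psi W γ T b (Mz W γ T b) ≤ psi W γ T b u := Mz_mem hγ hlip T b u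
  have h3 : E (Mz W γ T b) - T * (Mz W γ T b) ≤ E u - T * u := hmono _ _ hMA hlt.le
  have hs4 : 0 ≤ γ * (b - a) * (u - Mz W γ T b) :=
    mul_nonneg (mul_nonneg hγ.le (sub_nonneg.2 hab)) (sub_nonneg.2 hlt.le)
  have hmem : u ∈ minset W γ T b := by
    intro t
    have h4 := Mz_mem hγ hlip T b t
    unfold psi at h2 h4 ⊢
    set M := Mz W γ T b
    have hid : ((E M + W M + γ/2*(M - a)^2) - (E u + W u + γ/2*(u - a)^2))
        + ((T*u + W u + γ/2*(u - b)^2) - (T*M + W M + γ/2*(M - b)^2))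
        + ((E u - T*u) - (E M - T*M))
        + (γ * (b - a) * (u - M)) = 0 := by ring
    linarith
  exact absurd (Mz_le_of_mem hγ hlip hmem) (not_le.2 hlt)

end Homog

section SlopeHelpers

/-- secant slopes of a convex function are bounded by the left derivative -/
lemma slope_le_left_deriv {h : ℝ → ℝ} (hconv : ConvexOn ℝ Set.univ h) {x L : ℝ}
    (hL : HasDerivWithinAt h L (Set.Iio x) x) {z : ℝ} (hz : z < x) :
    (h z - h x) / (z - x) ≤ L := by
  have hsl : Filter.Tendsto (slope h x) (nhdsWithin x (Set.Iio x)) (nhds L) := by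
    have := hasDerivWithinAt_iff_tendsto_slope.1 hL
    rwa [Set.diff_singleton_eq_self (by simp)] at this
  refine ge_of_tendsto hsl ?_
  filter_upwards [Ioo_mem_nhdsLT_of_mem (Set.mem_Ioc.2 ⟨hz, le_refl x⟩)] with z' hz'
  rw [slope_def_field]
  exact hconv.secant_mono (Set.mem_univ x) (Set.mem_univ z) (Set.mem_univ z')
    (ne_of_lt hz) (ne_of_lt hz'.2) hz'.1.le

/-- `h - T • id` is nondecreasing to the right of `d`, where `T` is the secant slope on `[c,d]` -/
lemma region_mono {h : ℝ → ℝ} (hconv : ConvexOn ℝ Set.univ h) {c d : ℝ} (hcd : c < d) :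
    ∀ s s' : ℝ, d ≤ s → s ≤ s' →
      h s - (h d - h c) / (d - c) * s ≤ h s' - (h d - h c) / (d - c) * s' := by
  intro s s' hds hss
  rcases eq_or_lt_of_le hss with rfl | hss
  · exact le_refl _
  have h1 : (h d - h c) / (d - c) ≤ (h s' - h c) / (s' - c) :=
    hconv.secant_mono (Set.mem_univ c) (Set.mem_univ d) (Set.mem_univ s')
      (ne_of_gt hcd) (by intro he; rw [he] at hss; linarith) (by linarith)
  have h2 : (h c - h s') / (c - s') ≤ (h s - h s') / (s - s') :=
    hconv.secant_mono (Set.mem_univ s') (Set.mem_univ c) (Set.mem_univ s)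
      (by intro he; linarith [he ▸ hss]) (ne_of_lt hss) (by linarith)
  have e1 : (h c - h s') / (c - s') = (h s' - h c) / (s' - c) := by
    rw [div_eq_div_iff (by intro he; apply absurd he; intro h0; linarith [sub_eq_zero.1 h0])
      (by intro he; apply absurd he; intro h0; linarith [sub_eq_zero.1 h0])]
    ring
  have e2 : (h s - h s') / (s - s') = (h s' - h s) / (s' - s) := by
    rw [div_eq_div_iff (by intro he; linarith [sub_eq_zero.1 he])
      (by intro he; linarith [sub_eq_zero.1 he])]
    ring
  rw [e1] at h2
  rw [e2] at h2
  have h3 : (h d - h c) / (d - c) ≤ (h s' - h s) / (s' - s) := h1.trans h2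
  rw [div_le_div_iff₀ (by linarith) (by linarith)] at h3
  have hTd : (h d - h c) / (d - c) * (d - c) = h d - h c :=
    div_mul_cancel₀ _ (ne_of_gt (sub_pos.2 hcd))
  nlinarith [hTd, h3, sub_pos.2 hss, sub_pos.2 hcd]

end SlopeHelpers

set_option maxHeartbeats 1000000 in
lemma divle {a b c : ℝ} (h : a ≤ b) (hc : 0 < c) : a / c ≤ b / c := by gcongr

open Homog in
set_option maxHeartbeats 2000000 in
lemma lower
    (h : ℝ → ℝ) (hconv : ConvexOn ℝ Set.univ h)
    (W : ℝ → ℝ) (hper : Function.Periodic W 1) (hlip : LipschitzWith 1 W)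
    (γ : ℝ) (hγ : 0 < γ)
    (fγ : ℝ → ℝ)
    (hfγ : ∀ T : ℝ, ∀ y : ℕ → ℝ, IsOrbit W γ T y →
      Filter.Tendsto (fun i : ℕ => (y 0 - y i) / (i : ℝ)) Filter.atTop (nhds (fγ T)))
    (ε : ℕ → ℝ) (hε : ∀ n, 0 < ε n)
    (hε0 : Filter.Tendsto ε Filter.atTop (nhds 0))
    (xs : ℕ → ℕ → ℝ)
    (hxsmin : ∀ n i : ℕ, ∀ t : ℝ,
      h (xs n (i + 1)) + ε n * W (xs n (i + 1) / ε n)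
          + 1 / (2 * (ε n / γ)) * (xs n (i + 1) - xs n i) ^ 2 ≤
        h t + ε n * W (t / ε n) + 1 / (2 * (ε n / γ)) * (t - xs n i) ^ 2)
    (x : ℝ → ℝ)
    (hunif : ∀ M : ℝ, TendstoUniformlyOn
      (fun n t => xs n ⌊t / (ε n / γ)⌋₊) x Filter.atTop (Set.Icc 0 M))
    (t₀ : ℝ) (ht₀ : 0 ≤ t₀) (v : ℝ) (hx' : HasDerivAt x v t₀)
    (L : ℝ) (hL : HasDerivWithinAt h L (Set.Iio (x t₀)) (x t₀)) :
    γ * fγ L ≤ -v := by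
  set xst := x t₀ with hxst
  refine le_of_forall_pos_le_add fun θ hθ => ?_
  set δ1 := θ/(6*γ) with hδ1
  set δ2 := θ/(2*γ) with hδ2
  have hδ1p : 0 < δ1 := by rw [hδ1]; positivity
  have hδ2p : 0 < δ2 := by rw [hδ2]; positivity
  obtain ⟨σ, hσp, hcont⟩ := Homog.fγ_left_cont hγ hper hlip fγ hfγ L δ1 hδ1p
  -- the slope of h from the left converges to L
  have hsl : Filter.Tendsto (slope h xst) (nhdsWithin xst (Set.Iio xst)) (nhds L) := by
    have := hasDerivWithinAt_iff_tendsto_slope.1 hL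
    rwa [Set.diff_singleton_eq_self (by simp)] at this
  rw [Metric.tendsto_nhdsWithin_nhds] at hsl
  obtain ⟨ρ, hρp, hρ⟩ := hsl (σ/4) (by positivity)
  set r := ρ/4 with hr
  have hrp : 0 < r := by rw [hr]; positivity
  set T := (h (xst - r) - h (xst - 2*r)) / r with hTdef
  have hS : ∀ z, z < xst → |z - xst| < ρ → |(h z - h xst)/(z - xst) - L| < σ/4 := by
    intro z hz hd
    have := hρ (Set.mem_Iio.2 hz) (by rwa [Real.dist_eq])
    rwa [slope_def_field, Real.dist_eq] at this
  have hS1 := hS (xst - 2*r) (by linarith) (by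
    rw [(show xst - 2*r - xst = -(2*r) by ring), abs_neg,
      abs_of_pos (show (0:ℝ) < 2*r by linarith)]
    rw [hr]; linarith)
  have hS2 := hS (xst - r) (by linarith) (by
    rw [(show xst - r - xst = -r by ring), abs_neg, abs_of_pos hrp]
    rw [hr]; linarith)
  have hid : T = 2*((h (xst-2*r) - h xst)/((xst-2*r) - xst))
      - ((h (xst-r) - h xst)/((xst-r) - xst)) := by
    rw [hTdef]
    have h1 : xst - 2*r - xst = -(2*r) := by ring
    have h2 : xst - r - xst = -r := by ring
    rw [h1, h2]
    field_simp
    ring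
  have hTL : T ≤ L := by
    have hsec : T ≤ (h xst - h (xst - 2*r)) / (xst - (xst - 2*r)) := by
      have := hconv.secant_mono (Set.mem_univ (xst - 2*r)) (Set.mem_univ (xst - r))
        (Set.mem_univ xst) (by intro he; nlinarith [sub_eq_zero.1 (by linarith [he] : (xst - r) - (xst - 2*r) = 0)])
        (by intro he; nlinarith) (by linarith)
      calc T = (h (xst - r) - h (xst - 2*r)) / ((xst - r) - (xst - 2*r)) := by
            rw [hTdef, show (xst - r) - (xst - 2*r) = r by ring]
        _ ≤ (h xst - h (xst - 2*r)) / (xst - (xst - 2*r)) := this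
    have hld : (h (xst - 2*r) - h xst) / ((xst - 2*r) - xst) ≤ L :=
      slope_le_left_deriv hconv hL (by linarith)
    have he : (h (xst - 2*r) - h xst) / ((xst - 2*r) - xst)
        = (h xst - h (xst - 2*r)) / (xst - (xst - 2*r)) := by
      rw [div_eq_div_iff (by intro h0; nlinarith [sub_eq_zero.1 h0])
        (by intro h0; nlinarith [sub_eq_zero.1 h0])]
      ring
    rw [he] at hld
    exact hsec.trans hld
  have hTσ : L - σ ≤ T := by
    rw [hid]
    have ha1 := abs_lt.1 hS1
    have ha2 := abs_lt.1 hS2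
    have := ha1.1
    have := ha2.2
    linarith [ha1.1, ha1.2, ha2.1, ha2.2]
  have hfγT : fγ L - 3*δ1 ≤ fγ T := hcont T (by linarith) hTL
  -- region monotonicity
  have hmonoR : ∀ s s' : ℝ, xst - r ≤ s → s ≤ s' → h s - T*s ≤ h s' - T*s' := by
    intro s s' h1 h2
    have := region_mono hconv (show xst - 2*r < xst - r by linarith) s s' h1 h2
    rw [show xst - r - (xst - 2*r) = r by ring] at this
    rwa [hTdef]
  -- drift bound
  obtain ⟨q₁, hq₁p, hdrift⟩ := Homog.drift_upper fγ hγ hper hlip hfγ T δ2 hδ2p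
  -- continuity of x at t₀
  have hxc := hx'.continuousAt
  rw [Metric.continuousAt_iff] at hxc
  obtain ⟨ρ₂, hρ₂p, hρ₂⟩ := hxc (r/4) (by positivity)
  set η₀ := min (ρ₂/2) 1 with hη₀
  have hη₀p : 0 < η₀ := lt_min (by positivity) one_pos
  have hη₀1 : η₀ ≤ 1 := min_le_right _ _
  have hη₀ρ : η₀ ≤ ρ₂/2 := min_le_left _ _
  -- rescaled minimality of the scheme
  have hresc : ∀ n i : ℕ, ∀ z : ℝ,
      h (ε n * (xs n (i+1) / ε n)) / ε n + W (xs n (i+1) / ε n)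
          + γ/2 * (xs n (i+1)/ε n - xs n i/ε n)^2 ≤
        h (ε n * z) / ε n + W z + γ/2 * (z - xs n i/ε n)^2 := by
    intro n i z
    have hεn := hε n
    have hεne : ε n ≠ 0 := ne_of_gt hεn
    have hγne : γ ≠ 0 := ne_of_gt hγ
    have key := hxsmin n i (ε n * z)
    have hWz : ε n * z / ε n = z := by field_simp
    rw [hWz] at key
    have e1 : h (ε n * (xs n (i+1) / ε n)) / ε n + W (xs n (i+1) / ε n)
        + γ/2 * (xs n (i+1)/ε n - xs n i/ε n)^2
        = (h (xs n (i+1)) + ε n * W (xs n (i+1)/ε n)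
            + 1/(2*(ε n/γ)) * (xs n (i+1) - xs n i)^2) / ε n := by
      rw [show ε n * (xs n (i+1) / ε n) = xs n (i+1) by field_simp]
      field_simp
    have e2 : h (ε n * z) / ε n + W z + γ/2 * (z - xs n i/ε n)^2
        = (h (ε n * z) + ε n * W z + 1/(2*(ε n/γ)) * (ε n * z - xs n i)^2) / ε n := by
      field_simp
    rw [e1, e2]
    exact divle key hεn
  have main : ∀ η : ℝ, 0 < η → η ≤ η₀ → x (t₀ + η) - x t₀ ≤ -(γ*η) * (fγ T - δ2) := by
    intro η hηp hηle
    -- eventual smallness conditions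
    have hunif2 := hunif (t₀+2)
    rw [Metric.tendstoUniformlyOn_iff] at hunif2
    have hc4ev := hunif2 (r/4) (by positivity)
    have hc1ev : ∀ᶠ n in Filter.atTop, ε n < r*γ/(2*(|T|+2)) :=
      hε0.eventually (eventually_lt_nhds (by positivity))
    have hc2ev : ∀ᶠ n in Filter.atTop, ε n < γ*ρ₂/2 :=
      hε0.eventually (eventually_lt_nhds (by positivity))
    have hc3ev : ∀ᶠ n in Filter.atTop, ε n < η*γ/(q₁+1) :=
      hε0.eventually (eventually_lt_nhds (by positivity))
    -- the key eventual estimate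
    have hkey : ∀ᶠ n in Filter.atTop,
        xs n ⌊(t₀+η)/(ε n/γ)⌋₊ ≤ xs n ⌊t₀/(ε n/γ)⌋₊
            - (ε n * ((⌊(t₀+η)/(ε n/γ)⌋₊ : ℝ) - (⌊t₀/(ε n/γ)⌋₊ : ℝ))) * (fγ T - δ2) + ε n
          ∧ γ*η - ε n ≤ ε n * ((⌊(t₀+η)/(ε n/γ)⌋₊ : ℝ) - (⌊t₀/(ε n/γ)⌋₊ : ℝ))
          ∧ ε n * ((⌊(t₀+η)/(ε n/γ)⌋₊ : ℝ) - (⌊t₀/(ε n/γ)⌋₊ : ℝ)) ≤ γ*η + ε n := by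
      filter_upwards [hc1ev, hc2ev, hc3ev, hc4ev] with n hc1 hc2 hc3 hc4
      have hεn := hε n
      have hεne : ε n ≠ 0 := ne_of_gt hεn
      have hγne : γ ≠ 0 := ne_of_gt hγ
      set τ := ε n / γ with hτ
      have hτp : 0 < τ := div_pos hεn hγ
      have hγτ : γ * τ = ε n := by rw [hτ]; field_simp
      set i₀ := ⌊t₀/τ⌋₊ with hi₀
      set i₁ := ⌊(t₀+η)/τ⌋₊ with hi₁
      have hle : i₀ ≤ i₁ := Nat.floor_mono (divle (by linarith) hτp)
      have hf1 : (i₀:ℝ) ≤ t₀/τ := Nat.floor_le (by positivity)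
      have hf2 : t₀/τ < (i₀:ℝ) + 1 := Nat.lt_floor_add_one _
      have hf3 : (i₁:ℝ) ≤ (t₀+η)/τ := Nat.floor_le (by positivity)
      have hf4 : (t₀+η)/τ < (i₁:ℝ) + 1 := Nat.lt_floor_add_one _
      have hdm : ∀ s : ℝ, (s/τ) * τ = s := fun s => div_mul_cancel₀ s (ne_of_gt hτp)
      have htime : ∀ i : ℕ, xs n ⌊((i:ℝ)*τ)/τ⌋₊ = xs n i := by
        intro i
        rw [mul_div_cancel_right₀ _ (ne_of_gt hτp), Nat.floor_natCast]
      -- containment of all intermediate points near xst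
      have hcontain : ∀ i : ℕ, i₀ ≤ i → i ≤ i₁ → |xs n i - xst| < r/2 := by
        intro i h1 h2
        have hcast1 : (i₀:ℝ) ≤ i := by exact_mod_cast h1
        have hcast2 : (i:ℝ) ≤ i₁ := by exact_mod_cast h2
        have ht1 : (i:ℝ)*τ ≤ t₀ + η := by
          have := mul_le_mul_of_nonneg_right (hcast2.trans hf3) hτp.le
          rwa [hdm] at this
        have ht2 : t₀ - τ < (i:ℝ)*τ := by
          have h5 : t₀/τ < (i:ℝ) + 1 := lt_of_lt_of_le hf2 (by linarith)
          have := mul_lt_mul_of_pos_right h5 hτp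
          rw [hdm] at this
          linarith
        have htmem : (i:ℝ)*τ ∈ Set.Icc (0:ℝ) (t₀+2) :=
          ⟨by positivity, by linarith⟩
        have hd1 : dist (x ((i:ℝ)*τ)) (xs n i) < r/4 := by
          have := hc4 ((i:ℝ)*τ) htmem
          rwa [htime i] at this
        have hd2 : dist (x ((i:ℝ)*τ)) xst < r/4 := by
          apply hρ₂
          rw [Real.dist_eq, abs_lt]
          constructor
          · have hττ : τ ≤ ρ₂/2 := by
              rw [hτ, div_le_div_iff₀ hγ (by norm_num : (0:ℝ) < 2)]
              linarith
            linarith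
          · linarith
        rw [Real.dist_eq] at hd1 hd2
        calc |xs n i - xst| ≤ |x ((i:ℝ)*τ) - xs n i| + |x ((i:ℝ)*τ) - xst| := by
              rw [abs_sub_comm (x ((i:ℝ)*τ)) (xs n i)]
              exact abs_sub_le _ _ _
          _ < r/2 := by linarith
      have hsmall : (|T|+2) * ε n ≤ r*γ/2 := by
        have habs : (0:ℝ) < 2*(|T|+2) := by positivity
        rw [lt_div_iff₀ habs] at hc1
        linarith only [hc1]
      -- the comparison induction
      have hcomp : ∀ j : ℕ, i₀ + j ≤ i₁ →
          xs n (i₀+j)/ε n ≤ (Mz W γ T)^[j] (xs n i₀/ε n) := by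
        intro j
        induction j with
        | zero => intro _; simp
        | succ m ih =>
            intro hj
            have hm : i₀ + m ≤ i₁ := by omega
            have ihm := ih hm
            rw [Function.iterate_succ_apply']
            have hcm := hcontain (i₀+m) (by omega) hm
            have hcm1 := hcontain (i₀+m+1) (by omega) (by omega)
            have hxm : xst - r/2 ≤ xs n (i₀+m) := by
              rw [abs_lt] at hcm; linarith [hcm.1]
            have hxm1 : xst - r/2 ≤ xs n (i₀+m+1) := by
              rw [abs_lt] at hcm1; linarith [hcm1.1]
            refine Homog.cross hγ hlip (fun z => h (ε n * z)/ε n) (A := (xst - r)/ε n)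
              ?_ ihm ?_ ?_ ?_
            · -- region monotonicity scaled
              intro p q hp hpq
              have hsp : xst - r ≤ ε n * p := by
                rw [div_le_iff₀ hεn] at hp; linarith
              have hmr := hmonoR (ε n * p) (ε n * q) hsp
                (mul_le_mul_of_nonneg_left hpq hεn.le)
              have hdiv := divle hmr hεn
              calc h (ε n*p)/ε n - T*p = (h (ε n*p) - T*(ε n*p))/ε n := by
                    field_simp
                _ ≤ (h (ε n*q) - T*(ε n*q))/ε n := hdiv
                _ = h (ε n*q)/ε n - T*q := by field_simp
            · -- minimality of the rescaled point
              intro t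
              have := hresc n (i₀+m) t
              rwa [show i₀ + m + 1 = i₀ + (m+1) by omega] at this
            · -- lower bound on the new point
              rw [show i₀ + (m+1) = i₀ + m + 1 by omega]
              exact divle (by linarith) hεn
            · -- lower bound on the orbit point
              have hMb := (Homog.Mz_bounds hγ hlip T ((Mz W γ T)^[m] (xs n i₀/ε n))).1
              have hb : (xst - r/2)/ε n ≤ (Mz W γ T)^[m] (xs n i₀/ε n) :=
                le_trans (divle hxm hεn) ihm
              have e4 : T/γ + 2/γ ≤ (r/2)/ε n := by
                rw [← add_div, div_le_div_iff₀ hγ hεn]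
                calc (T+2)*ε n ≤ (|T|+2)*ε n :=
                      mul_le_mul_of_nonneg_right (by linarith [le_abs_self T]) hεn.le
                  _ ≤ r*γ/2 := hsmall
                  _ = r/2*γ := by ring
              have e3 : (xst - r/2)/ε n - (xst - r)/ε n = (r/2)/ε n := by
                field_simp; ring
              linarith only [hMb, hb, e4, e3]
      -- conclude with the drift bound
      have hadd : (t₀+η)/τ = t₀/τ + η/τ := add_div t₀ η τ
      have hq1r : (q₁:ℝ) + 1 ≤ η*γ/ε n := by
        have hq10 : (0:ℝ) < (q₁:ℝ)+1 := by positivity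
        have hc3' : ε n * ((q₁:ℝ)+1) < η*γ := (lt_div_iff₀ hq10).mp hc3
        rw [le_div_iff₀ hεn]
        nlinarith [hc3']
      have hhτ : η/τ = η*γ/ε n := by rw [hτ, div_div_eq_mul_div]
      have hqn : (q₁:ℝ) ≤ (i₁:ℝ) - i₀ := by
        have l1 : η/τ - 1 ≤ (i₁:ℝ) - i₀ := by linarith only [hf1, hf4, hadd]
        rw [hhτ] at l1
        linarith only [l1, hq1r]
      have hqnat : q₁ ≤ i₁ - i₀ := by
        have hcast : ((i₁ - i₀ : ℕ):ℝ) = (i₁:ℝ) - i₀ := by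
          rw [Nat.cast_sub hle]
        exact_mod_cast hcast ▸ hqn
      have hfinal := hcomp (i₁ - i₀) (by omega)
      rw [show i₀ + (i₁ - i₀) = i₁ by omega] at hfinal
      have hdr := hdrift (i₁ - i₀) hqnat (xs n i₀/ε n)
      have hcast : ((i₁ - i₀ : ℕ):ℝ) = (i₁:ℝ) - i₀ := by rw [Nat.cast_sub hle]
      rw [hcast] at hdr
      -- combine and multiply by ε n
      have hchain : xs n i₁/ε n ≤ xs n i₀/ε n
          - ((i₁:ℝ) - i₀) * fγ T + ((i₁:ℝ) - i₀) * δ2 + 1 :=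
        hfinal.trans (by linarith only [hdr])
      rw [div_le_iff₀ hεn] at hchain
      have hx0 : xs n i₀/ε n * ε n = xs n i₀ := div_mul_cancel₀ _ hεne
      refine ⟨?_, ?_, ?_⟩
      · calc xs n i₁ ≤ (xs n i₀/ε n - ((i₁:ℝ) - i₀) * fγ T + ((i₁:ℝ) - i₀) * δ2 + 1) * ε n :=
              hchain
          _ = xs n i₀/ε n * ε n - (ε n * ((i₁:ℝ) - i₀)) * (fγ T - δ2) + ε n := by ring
          _ = xs n i₀ - (ε n * ((i₁:ℝ) - i₀)) * (fγ T - δ2) + ε n := by rw [hx0]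
      · -- lower bound on ε n * (i₁ - i₀)
        have l1 : η/τ - 1 ≤ (i₁:ℝ) - i₀ := by linarith only [hf1, hf4, hadd]
        have l3 := mul_le_mul_of_nonneg_left l1 hεn.le
        have e5 : ε n * (η/τ) = γ * η := by rw [hτ]; field_simp
        have e6 : ε n * (η/τ - 1) = γ*η - ε n := by rw [mul_sub, e5, mul_one]
        linarith only [l3, e6]
      · have l2 : (i₁:ℝ) - i₀ ≤ η/τ + 1 := by linarith only [hf2, hf3, hadd]
        have l3 := mul_le_mul_of_nonneg_left l2 hεn.le
        have e5 : ε n * (η/τ) = γ * η := by rw [hτ]; field_simp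
        have e6 : ε n * (η/τ + 1) = γ*η + ε n := by rw [mul_add, e5, mul_one]
        linarith only [l3, e6]
    -- pass to the limit in n
    have hA : Filter.Tendsto (fun n => xs n ⌊(t₀+η)/(ε n/γ)⌋₊) Filter.atTop
        (nhds (x (t₀+η))) :=
      (hunif (t₀+2)).tendsto_at ⟨by linarith, by linarith⟩
    have hB : Filter.Tendsto (fun n => xs n ⌊t₀/(ε n/γ)⌋₊) Filter.atTop (nhds (x t₀)) :=
      (hunif (t₀+2)).tendsto_at ⟨ht₀, by linarith⟩
    set c : ℕ → ℝ := fun n => ε n * ((⌊(t₀+η)/(ε n/γ)⌋₊ : ℝ) - (⌊t₀/(ε n/γ)⌋₊ : ℝ)) with hcdef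
    have hclow : Filter.Tendsto (fun n => γ*η - ε n) Filter.atTop (nhds (γ*η)) := by
      simpa using tendsto_const_nhds.sub hε0
    have hchigh : Filter.Tendsto (fun n => γ*η + ε n) Filter.atTop (nhds (γ*η)) := by
      simpa using tendsto_const_nhds.add hε0
    have hc : Filter.Tendsto c Filter.atTop (nhds (γ*η)) :=
      tendsto_of_tendsto_of_tendsto_of_le_of_le' hclow hchigh
        (hkey.mono fun n hn => hn.2.1) (hkey.mono fun n hn => hn.2.2)
    have hRHS : Filter.Tendsto
        (fun n => xs n ⌊t₀/(ε n/γ)⌋₊ - c n * (fγ T - δ2) + ε n) Filter.atTop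
        (nhds (x t₀ - γ*η*(fγ T - δ2) + 0)) :=
      (hB.sub (hc.mul tendsto_const_nhds)).add hε0
    have hfin := le_of_tendsto_of_tendsto hA hRHS (hkey.mono fun n hn => hn.1)
    linarith
  -- pass to the derivative
  have hslope : Filter.Tendsto (fun t => (x t - x t₀)/(t - t₀)) (nhdsWithin t₀ (Set.Ioi t₀))
      (nhds v) := by
    have := hasDerivWithinAt_iff_tendsto_slope.1 (hx'.hasDerivWithinAt (s := Set.Ioi t₀))
    rw [Set.diff_singleton_eq_self (by simp)] at this
    have heq : slope x t₀ = fun t => (x t - x t₀)/(t - t₀) := by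
      funext t; rw [slope_def_field]
    rwa [heq] at this
  have hv : v ≤ -γ * (fγ T - δ2) := by
    refine le_of_tendsto hslope ?_
    filter_upwards [Ioc_mem_nhdsGT (show t₀ < t₀ + η₀ by linarith)] with t ht
    have hηp : 0 < t - t₀ := sub_pos.2 ht.1
    have := main (t - t₀) hηp (by linarith [ht.2])
    rw [show t₀ + (t - t₀) = t by ring] at this
    rw [div_le_iff₀ hηp]
    nlinarith
  have e2 : γ * δ2 = θ/2 := by rw [hδ2]; field_simp
  have e1 : γ * (3*δ1) = θ/2 := by rw [hδ1]; field_simp; ring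
  nlinarith [mul_le_mul_of_nonneg_left hfγT hγ.le]

theorem stmt_12
    -- `h` is strictly convex, nonnegative, with global minimum at `0`
    (h : ℝ → ℝ) (hnonneg : ∀ x : ℝ, 0 ≤ h x) (hconv : StrictConvexOn ℝ Set.univ h)
    (hmin : ∀ x : ℝ, h 0 ≤ h x)
    -- `W` is 1-periodic, even and Lipschitz with constant 1
    (W : ℝ → ℝ) (hper : Function.Periodic W 1) (heven : ∀ x : ℝ, W (-x) = W x)
    (hlip : LipschitzWith 1 W)
    (γ : ℝ) (hγ : 0 < γ)
    -- the homogenised velocity `fγ` of the linearized scheme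
    (fγ : ℝ → ℝ)
    (hfγ : ∀ T : ℝ, ∀ y : ℕ → ℝ, IsOrbit W γ T y →
      Filter.Tendsto (fun i : ℕ => (y 0 - y i) / (i : ℝ)) Filter.atTop (nhds (fγ T)))
    -- the minimizing-movement scheme with time step `τ_ε = ε / γ` and initial datum `x₀`
    (x₀ : ℝ) (ε : ℕ → ℝ) (hε : ∀ n, 0 < ε n)
    (hε0 : Filter.Tendsto ε Filter.atTop (nhds 0))
    (xs : ℕ → ℕ → ℝ) (hxs0 : ∀ n, xs n 0 = x₀)
    (hxsmin : ∀ n i : ℕ, ∀ t : ℝ,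
      h (xs n (i + 1)) + ε n * W (xs n (i + 1) / ε n)
          + 1 / (2 * (ε n / γ)) * (xs n (i + 1) - xs n i) ^ 2 ≤
        h t + ε n * W (t / ε n) + 1 / (2 * (ε n / γ)) * (t - xs n i) ^ 2)
    -- the piecewise-constant interpolations `t ↦ xs n ⌊t / τ_{ε n}⌋` converge to `x`
    -- uniformly on compact subsets of `[0, ∞)`
    (x : ℝ → ℝ)
    (hunif : ∀ M : ℝ, TendstoUniformlyOn
      (fun n t => xs n ⌊t / (ε n / γ)⌋₊) x Filter.atTop (Set.Icc 0 M))
    -- `x` is differentiable at `t₀ ≥ 0` with derivative `v`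
    (t₀ : ℝ) (ht₀ : 0 ≤ t₀) (v : ℝ) (hx' : HasDerivAt x v t₀)
    -- `L` and `R` are the left and right derivatives of the convex function `h` at `x t₀`
    (L R : ℝ)
    (hL : HasDerivWithinAt h L (Set.Iio (x t₀)) (x t₀))
    (hR : HasDerivWithinAt h R (Set.Ioi (x t₀)) (x t₀)) :
    γ * fγ L ≤ -v ∧ -v ≤ γ * fγ R := by
  constructor
  · exact lower h hconv.convexOn W hper hlip γ hγ fγ hfγ ε hε hε0 xs hxsmin x hunif
      t₀ ht₀ v hx' L hL
  · -- reflection: apply `lower` to the mirrored system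
    have hconv' : ConvexOn ℝ Set.univ (fun z => h (-z)) := by
      refine ⟨convex_univ, fun p _ q _ a b ha hb hab => ?_⟩
      have h2 := hconv.convexOn.2 (Set.mem_univ (-p)) (Set.mem_univ (-q)) ha hb hab
      have he : a • (-p) + b • (-q) = -(a • p + b • q) := by
        simp only [smul_eq_mul]; ring
      rw [he] at h2
      exact h2
    have hfγ' : ∀ T : ℝ, ∀ y : ℕ → ℝ, IsOrbit W γ T y →
        Filter.Tendsto (fun i : ℕ => (y 0 - y i) / (i : ℝ)) Filter.atTop
          (nhds (-fγ (-T))) := by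
      intro T y hy
      have hy' : IsOrbit W γ (-T) (fun i => -(y i)) := by
        intro i t
        have h3 := hy i (-t)
        have e1 : -T * -(y (i+1)) + W (-(y (i+1))) + γ/2*(-(y (i+1)) - -(y i))^2
            = T * y (i+1) + W (y (i+1)) + γ/2*(y (i+1) - y i)^2 := by
          rw [heven]; ring_nf
        have e2 : T * (-t) + W (-t) + γ/2*((-t) - y i)^2
            = -T * t + W t + γ/2*(t - -(y i))^2 := by
          rw [heven]; ring_nf
        calc -T * -(y (i+1)) + W (-(y (i+1))) + γ/2*(-(y (i+1)) - -(y i))^2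
            = T * y (i+1) + W (y (i+1)) + γ/2*(y (i+1) - y i)^2 := e1
          _ ≤ T * (-t) + W (-t) + γ/2*((-t) - y i)^2 := h3
          _ = -T * t + W t + γ/2*(t - -(y i))^2 := e2
      have h4 := (hfγ (-T) _ hy').neg
      have he : (fun i : ℕ => -(((fun i => -(y i)) 0 - (fun i => -(y i)) i) / (i:ℝ)))
          = fun i : ℕ => (y 0 - y i) / (i:ℝ) := by
        funext i
        simp only []
        ring
      rwa [he] at h4
    have hxsmin' : ∀ n i : ℕ, ∀ t : ℝ,
        (fun z => h (-z)) (-(xs n (i + 1))) + ε n * W (-(xs n (i + 1)) / ε n)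
            + 1 / (2 * (ε n / γ)) * (-(xs n (i + 1)) - -(xs n i)) ^ 2 ≤
          (fun z => h (-z)) t + ε n * W (t / ε n)
            + 1 / (2 * (ε n / γ)) * (t - -(xs n i)) ^ 2 := by
      intro n i t
      have h3 := hxsmin n i (-t)
      simp only [neg_neg]
      have e1 : W (-(xs n (i+1)) / ε n) = W (xs n (i+1) / ε n) := by
        rw [neg_div, heven]
      have e2 : W (-t / ε n) = W (t / ε n) := by rw [neg_div, heven]
      rw [e1]
      rw [e2] at h3
      calc h (xs n (i+1)) + ε n * W (xs n (i+1) / ε n)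
            + 1/(2*(ε n/γ)) * (-(xs n (i+1)) - -(xs n i))^2
          = h (xs n (i+1)) + ε n * W (xs n (i+1) / ε n)
            + 1/(2*(ε n/γ)) * (xs n (i+1) - xs n i)^2 := by ring_nf
        _ ≤ h (-t) + ε n * W (t / ε n) + 1/(2*(ε n/γ)) * (-t - xs n i)^2 := h3
        _ = h (-t) + ε n * W (t / ε n) + 1/(2*(ε n/γ)) * (t - -(xs n i))^2 := by ring_nf
    have hunif' : ∀ M : ℝ, TendstoUniformlyOn
        (fun n t => -(xs n ⌊t / (ε n / γ)⌋₊)) (fun t => -(x t)) Filter.atTop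
        (Set.Icc 0 M) := by
      intro M
      rw [Metric.tendstoUniformlyOn_iff]
      have h5 := hunif M
      rw [Metric.tendstoUniformlyOn_iff] at h5
      intro e he
      filter_upwards [h5 e he] with n hn t ht
      simpa [dist_neg_neg] using hn t ht
    have hR' : HasDerivWithinAt (fun z => h (-z)) (-R)
        (Set.Iio ((fun t => -(x t)) t₀)) ((fun t => -(x t)) t₀) := by
      simp only []
      have hneg : HasDerivWithinAt (fun z : ℝ => -z) (-1) (Set.Iio (-(x t₀))) (-(x t₀)) :=
        (hasDerivAt_neg _).hasDerivWithinAt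
      have hmaps : Set.MapsTo (fun z : ℝ => -z) (Set.Iio (-(x t₀))) (Set.Ioi (x t₀)) := by
        intro z hz
        simp only [Set.mem_Iio] at hz
        simp only [Set.mem_Ioi]
        linarith
      have hRouter : HasDerivWithinAt h R (Set.Ioi (x t₀)) ((fun z : ℝ => -z) (-(x t₀))) := by
        simp only [neg_neg]
        exact hR
      have := HasDerivWithinAt.comp (-(x t₀)) hRouter hneg hmaps
      simpa [Function.comp_def] using this
    have hfin := lower (fun z => h (-z)) hconv' W hper hlip γ hγ (fun T => -fγ (-T)) hfγ'
      ε hε hε0 (fun n i => -(xs n i)) hxsmin' (fun t => -(x t)) hunif' t₀ ht₀ (-v)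
      hx'.neg (-R) hR'
    simp only [neg_neg] at hfin
    linarith
end

section
/- Let W : ℝ → ℝ be a 1-periodic, even, Lipschitz function with Lipschitz constant 1. For every z ≥ 0, γ·f_γ(z) → z as γ → 0⁺, where f_γ(z) denotes the homogenised velocity of the linearized scheme with parameter z at scale γ. -/
/-!
Being 1-periodic and 1-Lipschitz, `W` oscillates by at most `1/2`. Comparing the minimizer
`y (i+1)` with the competitor `y i - T / γ` (the minimizer when `W = 0`) then gives
`γ / 2 * (y i - y (i+1) - T / γ) ^ 2 ≤ 1/2`, so every step, and hence the velocity, lies within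
`γ^(-1/2)` of `T / γ`: `|γ * f γ T - T| ≤ √γ`.
-/

open Filter Topology

lemma tendsto_sq_sub_cocompact_atTop (a : ℝ) :
    Tendsto (fun t : ℝ => (t - a) ^ 2) (cocompact ℝ) atTop := by
  have h : Tendsto (fun t : ℝ => |t - a|) (cocompact ℝ) atTop :=
    tendsto_norm_cocompact_atTop.comp (Homeomorph.subRight a).map_cocompact.le
  simpa only [Function.comp_def, sq_abs] using (tendsto_pow_atTop two_ne_zero).comp h

lemma exists_forall_le_linear_add_sq {W : ℝ → ℝ} {m γ : ℝ} (hW : Continuous W)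
    (hm : ∀ t, m ≤ W t) (hγ : 0 < γ) (T c : ℝ) :
    ∃ x, ∀ t, T * x + W x + γ / 2 * (x - c) ^ 2 ≤ T * t + W t + γ / 2 * (t - c) ^ 2 := by
  refine (by fun_prop : Continuous fun t => T * t + W t + γ / 2 * (t - c) ^ 2).exists_forall_le ?_
  set a := c - T / γ
  have hlow : ∀ t, γ / 2 * (t - a) ^ 2 + (m + T * c - γ / 2 * (T / γ) ^ 2) ≤
      T * t + W t + γ / 2 * (t - c) ^ 2 := by
    intro t
    have : γ / 2 * (t - a) ^ 2 + T * c - γ / 2 * (T / γ) ^ 2 = T * t + γ / 2 * (t - c) ^ 2 := by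
      simp only [a]; field_simp; ring
    linarith [hm t]
  exact tendsto_atTop_mono hlow <| tendsto_atTop_add_const_right _ _ <|
    (tendsto_sq_sub_cocompact_atTop a).const_mul_atTop (by positivity)

lemma exists_isOrbit_s14 {W : ℝ → ℝ} {m γ : ℝ} (hW : Continuous W) (hm : ∀ t, m ≤ W t)
    (hγ : 0 < γ) (T : ℝ) : ∃ y, IsOrbit W γ T y := by
  choose next hnext using exists_forall_le_linear_add_sq hW hm hγ T
  exact ⟨fun i => next^[i] 0, fun i => by simpa only [Function.iterate_succ_apply'] using hnext _⟩

lemma sub_le_half_of_periodic_of_lipschitzWith {W : ℝ → ℝ} (hper : Function.Periodic W 1)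
    (hlip : LipschitzWith 1 W) (a b : ℝ) : W a - W b ≤ 1 / 2 := by
  set n := round (a - b)
  calc W a - W b = W (a - n) - W b := by rw [← mul_one (n : ℝ), hper.sub_int_mul_eq]
    _ ≤ |a - n - b| := by
        have := hlip.dist_le_mul (a - n) b
        rw [NNReal.coe_one, one_mul, Real.dist_eq, Real.dist_eq] at this
        exact (le_abs_self _).trans this
    _ ≤ 1 / 2 := by rw [sub_right_comm]; exact abs_sub_round (a - b)

lemma IsOrbit.sq_step_sub_le {W : ℝ → ℝ} {γ T δ : ℝ} {y : ℕ → ℝ} (hy : IsOrbit W γ T y)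
    (hγ : 0 < γ) (hosc : ∀ a b, W a - W b ≤ δ) (i : ℕ) :
    γ / 2 * (y i - y (i + 1) - T / γ) ^ 2 ≤ δ := by
  have hcomp := hy i (y i - T / γ)
  have hW := hosc (y i - T / γ) (y (i + 1))
  -- with `T = γ * v` the claim is a polynomial consequence of `hcomp` and `hW`
  have hT : T = γ * (T / γ) := by field_simp
  generalize T / γ = v at *
  subst hT
  nlinarith

lemma abs_div_sub_le_of_abs_step_sub_le {u : ℕ → ℝ} {a b : ℝ}
    (h : ∀ i, |u i - u (i + 1) - a| ≤ b) {n : ℕ} (hn : 0 < n) :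
    |(u 0 - u n) / n - a| ≤ b := by
  have hn' : (0 : ℝ) < n := Nat.cast_pos.mpr hn
  have hsum : u 0 - u n - n * a = ∑ i ∈ Finset.range n, (u i - u (i + 1) - a) := by
    rw [Finset.sum_sub_distrib, Finset.sum_range_sub']; simp
  calc |(u 0 - u n) / n - a| = |∑ i ∈ Finset.range n, (u i - u (i + 1) - a)| / n := by
        rw [← hsum, ← abs_of_pos hn', ← abs_div, abs_of_pos hn']
        congr 1; field_simp
    _ ≤ (∑ i ∈ Finset.range n, b) / n := by
        gcongr; exact (Finset.abs_sum_le_sum_abs _ _).trans (Finset.sum_le_sum fun i _ => h i)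
    _ = b := by
        rw [Finset.sum_const, Finset.card_range, nsmul_eq_mul, mul_div_cancel_left₀ _ hn'.ne']

lemma IsOrbit.abs_mul_velocity_sub_le {W : ℝ → ℝ} {γ T v : ℝ} {y : ℕ → ℝ} (hy : IsOrbit W γ T y)
    (hγ : 0 < γ) (hosc : ∀ a b, W a - W b ≤ 1 / 2)
    (hv : Tendsto (fun i : ℕ => (y 0 - y i) / i) atTop (𝓝 v)) :
    |γ * v - T| ≤ √γ := by
  have hstep (i : ℕ) : |y i - y (i + 1) - T / γ| ≤ √γ⁻¹ := by
    refine Real.abs_le_sqrt ?_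
    have := hy.sq_step_sub_le hγ hosc i
    rw [← one_div, le_div_iff₀ hγ]
    linarith
  have hlim : |v - T / γ| ≤ √γ⁻¹ :=
    le_of_tendsto ((hv.sub_const _).abs) <| eventually_atTop.2
      ⟨1, fun n hn => abs_div_sub_le_of_abs_step_sub_le hstep hn⟩
  calc |γ * v - T| = γ * |v - T / γ| := by
        rw [← abs_of_pos hγ, ← abs_mul, abs_of_pos hγ, mul_sub, mul_div_cancel₀ _ hγ.ne']
    _ ≤ γ * √γ⁻¹ := by gcongr
    _ = √γ := by rw [Real.sqrt_inv, ← div_eq_mul_inv, Real.div_sqrt]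

theorem stmt_14_general (W : ℝ → ℝ) (hper : Function.Periodic W 1)
    (hlip : LipschitzWith 1 W)
    -- `f γ T` is the homogenised velocity of the linearized scheme with parameter `T`
    -- at scale `γ`
    (f : ℝ → ℝ → ℝ)
    (hf : ∀ γ : ℝ, 0 < γ → ∀ T : ℝ, ∀ y : ℕ → ℝ, IsOrbit W γ T y →
      Filter.Tendsto (fun i : ℕ => (y 0 - y i) / (i : ℝ)) Filter.atTop (nhds (f γ T)))
    (z : ℝ) :
    Filter.Tendsto (fun γ : ℝ => γ * f γ z) (nhdsWithin 0 (Set.Ioi 0)) (nhds z) := by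
  have hosc := sub_le_half_of_periodic_of_lipschitzWith hper hlip
  have hbdd (t : ℝ) : W 0 - 1 / 2 ≤ W t := by linarith [hosc 0 t]
  have hclose (γ : ℝ) (hγ : 0 < γ) : ‖γ * f γ z - z‖ ≤ √γ := by
    obtain ⟨y, hy⟩ := exists_isOrbit_s14 hlip.continuous hbdd hγ z
    exact hy.abs_mul_velocity_sub_le hγ hosc (hf γ hγ z y hy)
  have hsqrt : Tendsto (fun γ : ℝ => √γ) (𝓝[>] 0) (𝓝 0) := by
    simpa using Real.continuous_sqrt.continuousWithinAt.tendsto (s := Set.Ioi 0) (x := 0)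
  rw [tendsto_iff_norm_sub_tendsto_zero]
  exact squeeze_zero' (.of_forall fun _ => norm_nonneg _)
    (eventually_nhdsWithin_of_forall hclose) hsqrt

theorem stmt_14 (W : ℝ → ℝ) (hper : Function.Periodic W 1) (heven : ∀ x : ℝ, W (-x) = W x)
    (hlip : LipschitzWith 1 W)
    -- `f γ T` is the homogenised velocity of the linearized scheme with parameter `T`
    -- at scale `γ`
    (f : ℝ → ℝ → ℝ)
    (hf : ∀ γ : ℝ, 0 < γ → ∀ T : ℝ, ∀ y : ℕ → ℝ, IsOrbit W γ T y →
      Filter.Tendsto (fun i : ℕ => (y 0 - y i) / (i : ℝ)) Filter.atTop (nhds (f γ T)))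
    (z : ℝ) (hz : 0 ≤ z) :
    Filter.Tendsto (fun γ : ℝ => γ * f γ z) (nhdsWithin 0 (Set.Ioi 0)) (nhds z) :=
  stmt_14_general W hper hlip f hf z
end

section
/- Let W(y) = min_{k∈ℤ} (y − k)², let γ > 0 and let 0 < T ≤ γ/(2+γ). Then for every initial datum y₀ ∈ [0, 1/2), every orbit (y_h) of the linearized scheme with parameter T satisfies y_h = (γ/(2+γ))^h · (y₀ + T/2) − T/2 for all h ∈ ℕ; in particular y_h → −T/2 as h → ∞, lim_{h→∞} (y₀ − y_h)/h = 0, and the motion is pinned. -/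
/-- The 1-periodic piecewise-quadratic potential `W y = min_{k ∈ ℤ} (y - k) ^ 2`. -/
noncomputable def Wq (y : ℝ) : ℝ := ⨅ k : ℤ, (y - (k : ℝ)) ^ 2

/-!
`W` is the lower envelope of the parabolas `(t - k) ^ 2`, `k ∈ ℤ`, so minimizing
`T t + W t + γ/2 (t - a) ^ 2` means minimizing each branch energy
`T t + (t - k) ^ 2 + γ/2 (t - a) ^ 2` and comparing the minima. Completing the square, the
`k`-th minimum exceeds the `0`-th one by `k (k γ - 2 γ a + 2 T) / (2 + γ)`, which is positive
for every `k ≠ 0` as long as `-T/2 < a < 1/2` and `0 ≤ T ≤ γ / (2 + γ)`. Hence the scheme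
steps by the affine map `a ↦ (γ a - T) / (2 + γ)`, a contraction with ratio `γ / (2 + γ)` and
fixed point `-T/2`, which keeps `(-T/2, 1/2)` invariant.
-/

open Filter Topology

lemma Wq_le_sq_sub (t : ℝ) (k : ℤ) : Wq t ≤ (t - k) ^ 2 :=
  ciInf_le ⟨0, by rintro x ⟨k, rfl⟩; positivity⟩ k

lemma Wq_eq_sq_sub_round (t : ℝ) : Wq t = (t - round t) ^ 2 :=
  le_antisymm (Wq_le_sq_sub t _) (le_ciInf fun k => sq_le_sq.mpr (round_le t k))

noncomputable def linStep (γ T a : ℝ) : ℝ := (γ * a - T) / (2 + γ)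

noncomputable def branchEnergy (γ T a k t : ℝ) : ℝ := T * t + (t - k) ^ 2 + γ / 2 * (t - a) ^ 2

section LinearizedStep

variable {γ T a : ℝ}

lemma branchEnergy_sub_branchEnergy_linStep (hγ : 2 + γ ≠ 0) (k t : ℝ) :
    branchEnergy γ T a k t - branchEnergy γ T a 0 (linStep γ T a) =
      (2 + γ) / 2 * (t - linStep γ T a - 2 * k / (2 + γ)) ^ 2 +
        k * (k * γ - 2 * γ * a + 2 * T) / (2 + γ) := by
  unfold branchEnergy linStep
  field_simp
  ring

lemma branch_gap_pos (hγ : 0 < γ) (hT0 : 0 ≤ T) (hT : T ≤ γ / (2 + γ))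
    (ha : a ∈ Set.Ioo (-(T / 2)) (1 / 2)) {k : ℤ} (hk : k ≠ 0) :
    0 < k * (k * γ - 2 * γ * a + 2 * T) := by
  obtain ⟨ha₀, ha₁⟩ := ha
  have hT' : T * (2 + γ) ≤ γ := (le_div_iff₀ (by linarith)).mp hT
  rcases hk.lt_or_gt with hk | hk
  · have hk' : (k : ℝ) ≤ -1 := by exact_mod_cast Int.le_sub_one_of_lt hk
    apply mul_pos_of_neg_of_neg (by linarith)
    nlinarith
  · have hk' : (1 : ℝ) ≤ k := by exact_mod_cast hk
    apply mul_pos (by linarith)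
    nlinarith

lemma branchEnergy_linStep_lt (hγ : 0 < γ) (hT0 : 0 ≤ T) (hT : T ≤ γ / (2 + γ))
    (ha : a ∈ Set.Ioo (-(T / 2)) (1 / 2)) (k : ℤ) {t : ℝ} (ht : t ≠ linStep γ T a) :
    branchEnergy γ T a 0 (linStep γ T a) < branchEnergy γ T a k t := by
  have hγ2 : (0 : ℝ) < 2 + γ := by linarith
  rw [← sub_pos, branchEnergy_sub_branchEnergy_linStep hγ2.ne']
  rcases eq_or_ne k 0 with rfl | hk
  · have : t - linStep γ T a ≠ 0 := sub_ne_zero.mpr ht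
    simp only [Int.cast_zero, mul_zero, zero_div, sub_zero, zero_mul, add_zero]
    positivity
  · have := div_pos (branch_gap_pos hγ hT0 hT ha hk) hγ2
    positivity

lemma eq_linStep_of_isMinimizer (hγ : 0 < γ) (hT0 : 0 ≤ T) (hT : T ≤ γ / (2 + γ))
    (ha : a ∈ Set.Ioo (-(T / 2)) (1 / 2)) {b : ℝ}
    (hb : ∀ t : ℝ, T * b + Wq b + γ / 2 * (b - a) ^ 2 ≤ T * t + Wq t + γ / 2 * (t - a) ^ 2) :
    b = linStep γ T a := by
  by_contra hne
  have hle := hb (linStep γ T a)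
  have hWm := Wq_le_sq_sub (linStep γ T a) 0
  have hlt := branchEnergy_linStep_lt hγ hT0 hT ha (round b) hne
  rw [Wq_eq_sq_sub_round b] at hle
  simp only [branchEnergy, Int.cast_zero] at hWm hlt
  linarith

end LinearizedStep

lemma IsOrbit.eq_geometric {γ T : ℝ} (hγ : 0 < γ) (hT0 : 0 ≤ T) (hT : T ≤ γ / (2 + γ))
    {y : ℕ → ℝ} (hy : IsOrbit Wq γ T y) (hy0 : y 0 ∈ Set.Ioo (-(T / 2)) (1 / 2)) (n : ℕ) :
    y n = (γ / (2 + γ)) ^ n * (y 0 + T / 2) - T / 2 := by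
  have hγ2 : (0 : ℝ) < 2 + γ := by linarith
  have hr0 : 0 < γ / (2 + γ) := div_pos hγ hγ2
  have hr1 : γ / (2 + γ) < 1 := (div_lt_one hγ2).mpr (by linarith)
  induction n with
  | zero => ring
  | succ n ih =>
    have hpos : 0 < (γ / (2 + γ)) ^ n * (y 0 + T / 2) :=
      mul_pos (pow_pos hr0 n) (by linarith [hy0.1])
    have hle : (γ / (2 + γ)) ^ n * (y 0 + T / 2) ≤ y 0 + T / 2 :=
      mul_le_of_le_one_left (by linarith [hy0.1]) (pow_le_one₀ hr0.le hr1.le)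
    have hyn : y n ∈ Set.Ioo (-(T / 2)) (1 / 2) := by
      rw [ih]; constructor <;> linarith [hy0.2]
    rw [eq_linStep_of_isMinimizer hγ hT0 hT hyn (hy n), ih, linStep, pow_succ]
    field_simp
    ring

theorem stmt_15 (γ : ℝ) (hγ : 0 < γ) (T : ℝ) (hT0 : 0 < T) (hT : T ≤ γ / (2 + γ))
    (y₀ : ℝ) (hy₀ : y₀ ∈ Set.Ico (0 : ℝ) (1 / 2))
    (y : ℕ → ℝ) (hy0 : y 0 = y₀) (hy : IsOrbit Wq γ T y) :
    (∀ h : ℕ, y h = (γ / (2 + γ)) ^ h * (y₀ + T / 2) - T / 2) ∧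
    Filter.Tendsto y Filter.atTop (nhds (-(T / 2))) ∧
    Filter.Tendsto (fun h : ℕ => (y 0 - y h) / (h : ℝ)) Filter.atTop (nhds 0) := by
  have hform : ∀ h : ℕ, y h = (γ / (2 + γ)) ^ h * (y₀ + T / 2) - T / 2 := by
    subst hy0
    exact hy.eq_geometric hγ hT0.le hT ⟨by linarith [hy₀.1], hy₀.2⟩
  have hγ2 : (0 : ℝ) < 2 + γ := by linarith
  have hpow : Tendsto (fun h : ℕ => (γ / (2 + γ)) ^ h) atTop (𝓝 0) :=
    tendsto_pow_atTop_nhds_zero_of_lt_one (div_pos hγ hγ2).le ((div_lt_one hγ2).mpr (by linarith))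
  have hlim : Tendsto y atTop (𝓝 (-(T / 2))) := by
    rw [funext hform, ← zero_sub, ← zero_mul (y₀ + T / 2)]
    exact (hpow.mul_const _).sub_const _
  exact ⟨hform, hlim, (tendsto_const_nhds.sub hlim).div_atTop tendsto_natCast_atTop_atTop⟩
end

section
/- Let W(y) = min_{k∈ℤ} (y − k)², let γ > 0, let γ/(2+γ) < T < 1 and set δ_T = ((2+γ)/(2γ))·(T − γ/(2+γ)). If −T/2 + δ_T ≤ y₀ < 1/2, then the global minimum over ℝ of the function y ↦ T·y + W(y) + (γ/2)(y − y₀)² is attained at the point y_{1,0} = (γ·y₀ − T)/(2+γ), which lies in the well [−1/2, 1/2]; that is, the first iterate of the linearized scheme stays in the same well. -/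
lemma bddBelow_range_sq_sub_intCast (y : ℝ) :
    BddBelow (Set.range fun k : ℤ => (y - (k : ℝ)) ^ 2) :=
  ⟨0, by rintro x ⟨k, rfl⟩; positivity⟩

lemma Wq_le (y : ℝ) (k : ℤ) : Wq y ≤ (y - k) ^ 2 :=
  ciInf_le (bddBelow_range_sq_sub_intCast y) k

lemma le_Wq {c y : ℝ} (h : ∀ k : ℤ, c ≤ (y - k) ^ 2) : c ≤ Wq y :=
  le_ciInf h

lemma intCast_mul_add_nonneg (k : ℤ) {c : ℝ} (hc : |c| ≤ 1) : 0 ≤ (k : ℝ) * (k + c) := by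
  rcases eq_or_ne k 0 with rfl | hk
  · simp
  have hk1 : 1 ≤ |(k : ℝ)| := by exact_mod_cast Int.one_le_abs hk
  have hkc : |(k : ℝ)| * |c| ≤ |(k : ℝ)| := mul_le_of_le_one_right (abs_nonneg _) hc
  nlinarith [abs_mul_abs_self (k : ℝ), neg_abs_le ((k : ℝ) * c), abs_mul (k : ℝ) c]

section Wells

variable {γ T y₀ : ℝ}

lemma well_energy_eq (hγ : 2 + γ ≠ 0) (k : ℤ) (t : ℝ) :
    T * t + (t - k) ^ 2 + γ / 2 * (t - y₀) ^ 2 =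
      T * ((γ * y₀ - T) / (2 + γ)) + ((γ * y₀ - T) / (2 + γ)) ^ 2
        + γ / 2 * ((γ * y₀ - T) / (2 + γ) - y₀) ^ 2
        + k * (γ * k + 2 * (T - γ * y₀)) / (2 + γ)
        + (2 + γ) / 2 * (t - (2 * k + γ * y₀ - T) / (2 + γ)) ^ 2 := by
  field_simp
  ring

lemma well_energy_min_le (hγ : 0 < γ) (hy₀ : |γ * y₀ - T| ≤ γ / 2) (k : ℤ) (t : ℝ) :
    T * ((γ * y₀ - T) / (2 + γ)) + ((γ * y₀ - T) / (2 + γ)) ^ 2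
        + γ / 2 * ((γ * y₀ - T) / (2 + γ) - y₀) ^ 2 ≤
      T * t + (t - k) ^ 2 + γ / 2 * (t - y₀) ^ 2 := by
  have h2γ : 0 < 2 + γ := by linarith
  have hc : |2 * (T - γ * y₀) / γ| ≤ 1 := by
    rw [abs_div, abs_of_pos hγ, div_le_one hγ, abs_mul, abs_two, abs_sub_comm]
    linarith
  have hexcess : 0 ≤ (k : ℝ) * (γ * k + 2 * (T - γ * y₀)) := by
    have hfactor : (k : ℝ) * (γ * k + 2 * (T - γ * y₀)) =
        γ * (k * (k + 2 * (T - γ * y₀) / γ)) := by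
      field_simp
    rw [hfactor]
    exact mul_nonneg hγ.le (intCast_mul_add_nonneg k hc)
  rw [well_energy_eq h2γ.ne' k t]
  have := div_nonneg hexcess h2γ.le
  have := mul_nonneg (div_nonneg h2γ.le zero_le_two)
    (sq_nonneg (t - (2 * k + γ * y₀ - T) / (2 + γ)))
  linarith

lemma well_zero_minimizer_mem_Icc (hγ : 0 < γ) (hy₀ : |γ * y₀ - T| ≤ γ / 2) :
    (γ * y₀ - T) / (2 + γ) ∈ Set.Icc (-(1 : ℝ) / 2) (1 / 2) := by
  have h2γ : 0 < 2 + γ := by linarith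
  rw [abs_le] at hy₀
  constructor
  · rw [le_div_iff₀ h2γ]; linarith
  · rw [div_le_iff₀ h2γ]; linarith

lemma energy_le_of_abs_le (hγ : 0 < γ) (hy₀ : |γ * y₀ - T| ≤ γ / 2) (t : ℝ) :
    T * ((γ * y₀ - T) / (2 + γ)) + Wq ((γ * y₀ - T) / (2 + γ))
        + γ / 2 * ((γ * y₀ - T) / (2 + γ) - y₀) ^ 2 ≤
      T * t + Wq t + γ / 2 * (t - y₀) ^ 2 := by
  have hWv := Wq_le ((γ * y₀ - T) / (2 + γ)) 0
  have hWt : T * ((γ * y₀ - T) / (2 + γ)) + ((γ * y₀ - T) / (2 + γ)) ^ 2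
      + γ / 2 * ((γ * y₀ - T) / (2 + γ) - y₀) ^ 2 - T * t - γ / 2 * (t - y₀) ^ 2 ≤ Wq t :=
    le_Wq fun k => by linarith [well_energy_min_le hγ hy₀ k t]
  push_cast at hWv
  linarith

end Wells

theorem stmt_17_general (γ : ℝ) (hγ : 0 < γ) (T : ℝ) (hTlo : γ / (2 + γ) < T)
    (δT : ℝ) (hδT : δT = (2 + γ) / (2 * γ) * (T - γ / (2 + γ)))
    (y₀ : ℝ) (hy₀0 : -(T / 2) + δT ≤ y₀) (hy₀1 : y₀ < 1 / 2) :
    (γ * y₀ - T) / (2 + γ) ∈ Set.Icc (-(1 : ℝ) / 2) (1 / 2) ∧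
    ∀ t : ℝ,
      T * ((γ * y₀ - T) / (2 + γ)) + Wq ((γ * y₀ - T) / (2 + γ))
          + γ / 2 * ((γ * y₀ - T) / (2 + γ) - y₀) ^ 2 ≤
        T * t + Wq t + γ / 2 * (t - y₀) ^ 2 := by
  have hT : 0 < T := (div_pos hγ (by linarith)).trans hTlo
  have hδT' : δT = T / γ + T / 2 - 1 / 2 := by
    rw [hδT]; field_simp
  have hlo : T - γ / 2 ≤ γ * y₀ := by
    have : T / γ - 1 / 2 ≤ y₀ := by linarith
    rw [sub_le_iff_le_add, div_le_iff₀ hγ] at this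
    linarith
  have hy₀ : |γ * y₀ - T| ≤ γ / 2 := by
    have hhi : γ * y₀ < γ * (1 / 2) := mul_lt_mul_of_pos_left hy₀1 hγ
    rw [abs_le]
    constructor <;> linarith
  exact ⟨well_zero_minimizer_mem_Icc hγ hy₀, energy_le_of_abs_le hγ hy₀⟩

theorem stmt_17 (γ : ℝ) (hγ : 0 < γ) (T : ℝ) (hTlo : γ / (2 + γ) < T) (hThi : T < 1)
    (δT : ℝ) (hδT : δT = (2 + γ) / (2 * γ) * (T - γ / (2 + γ)))
    (y₀ : ℝ) (hy₀0 : -(T / 2) + δT ≤ y₀) (hy₀1 : y₀ < 1 / 2) :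
    (γ * y₀ - T) / (2 + γ) ∈ Set.Icc (-(1 : ℝ) / 2) (1 / 2) ∧
    ∀ t : ℝ,
      T * ((γ * y₀ - T) / (2 + γ)) + Wq ((γ * y₀ - T) / (2 + γ))
          + γ / 2 * ((γ * y₀ - T) / (2 + γ) - y₀) ^ 2 ≤
        T * t + Wq t + γ / 2 * (t - y₀) ^ 2 :=
  stmt_17_general γ hγ T hTlo δT hδT y₀ hy₀0 hy₀1
end
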